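/- arXiv:math/0611605 — 12 statements merged into one kernel-verified Lean document; each statement's English description precedes it below -/
import Mathlib

section
/- Let (V, ⟨·,·⟩, J, A) be a complex model. Then A(Jx, Jy, Jz, Jw) = A(x, y, z, w) holds for all x, y, z, w ∈ V if and only if the complex Jacobi operator commutes with J for every complex line, i.e. if and only if A(y, x, x, Jz) + A(y, Jx, Jx, Jz) = −A(Jy, x, x, z) − A(Jy, Jx, Jx, z) for all x, y, z ∈ V. -/
open scoped RealInnerProductSpace

/-!
An algebraic curvature tensor is determined by its values `A(x, y, y, x)` (polarize, then use
the Bianchi identity). The pullback `A(J·, J·, J·, J·)` is again one, so it suffices to show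
`A(Jx, Jy, Jy, Jx) = A(x, y, y, x)`. With `a = A(x, y, y, x)`, `b = A(x, Jy, Jy, x)`,
`c = A(Jx, Jy, Jy, Jx)`, `d = A(Jx, y, y, Jx)`, commutation with `J` of the complex Jacobi
operators of `π_y` and `π_x` gives `a + b = c + d` and `a + d = b + c`, whence `a = c`.
-/

section

variable {V : Type*} [AddCommGroup V] [Module ℝ V]

structure IsAlgCurvatureTensor (A : V →ₗ[ℝ] V →ₗ[ℝ] V →ₗ[ℝ] V →ₗ[ℝ] ℝ) : Prop where
  antisymm : ∀ x y z w, A x y z w = -A y x z w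
  pair_symm : ∀ x y z w, A x y z w = A z w x y
  bianchi : ∀ x y z w, A x y z w + A y z x w + A z x y w = 0

def pullback₂ (J : V →ₗ[ℝ] V) : (V →ₗ[ℝ] V →ₗ[ℝ] ℝ) →ₗ[ℝ] V →ₗ[ℝ] V →ₗ[ℝ] ℝ where
  toFun B := B.compl₁₂ J J
  map_add' _ _ := rfl
  map_smul' _ _ := rfl

def pullback₄ (J : V →ₗ[ℝ] V) (A : V →ₗ[ℝ] V →ₗ[ℝ] V →ₗ[ℝ] V →ₗ[ℝ] ℝ) :
    V →ₗ[ℝ] V →ₗ[ℝ] V →ₗ[ℝ] V →ₗ[ℝ] ℝ :=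
  (A.compl₁₂ J J).compr₂ (pullback₂ J)

@[simp]
theorem pullback₄_apply (J : V →ₗ[ℝ] V) (A : V →ₗ[ℝ] V →ₗ[ℝ] V →ₗ[ℝ] V →ₗ[ℝ] ℝ)
    (x y z w : V) : pullback₄ J A x y z w = A (J x) (J y) (J z) (J w) :=
  rfl

/-- `complexJacobiForm J A x y z = ⟪𝒥(π_x) y, z⟫`. -/
def complexJacobiForm (J : V →ₗ[ℝ] V) (A : V →ₗ[ℝ] V →ₗ[ℝ] V →ₗ[ℝ] V →ₗ[ℝ] ℝ)
    (x y z : V) : ℝ :=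
  A y x x z + A y (J x) (J x) z

variable {J : V →ₗ[ℝ] V} {A B : V →ₗ[ℝ] V →ₗ[ℝ] V →ₗ[ℝ] V →ₗ[ℝ] ℝ}

namespace IsAlgCurvatureTensor

theorem antisymm_right (hA : IsAlgCurvatureTensor A) (x y z w : V) :
    A x y z w = -A x y w z := by
  rw [hA.pair_symm, hA.antisymm, hA.pair_symm w z]

theorem pullback₄ (hA : IsAlgCurvatureTensor A) (J : V →ₗ[ℝ] V) :
    IsAlgCurvatureTensor (pullback₄ J A) where
  antisymm _ _ _ _ := hA.antisymm _ _ _ _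
  pair_symm _ _ _ _ := hA.pair_symm _ _ _ _
  bianchi _ _ _ _ := hA.bianchi _ _ _ _

theorem ext_of_apply_self (hA : IsAlgCurvatureTensor A) (hB : IsAlgCurvatureTensor B)
    (h : ∀ x y, A x y y x = B x y y x) : A = B := by
  have hyy : ∀ x y w, A x y y w = B x y y w := by
    intro x y w
    have hpol := h (x + w) y
    simp only [map_add, LinearMap.add_apply, h x y, h w y] at hpol
    linarith [hA.pair_symm w y y x, hA.antisymm y x w y, hA.antisymm_right x y w y,
      hB.pair_symm w y y x, hB.antisymm y x w y, hB.antisymm_right x y w y]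
  have hmid : ∀ x y z w, A x y z w - B x y z w = -(A x z y w - B x z y w) := by
    intro x y z w
    have hpol := hyy x (y + z) w
    simp only [map_add, LinearMap.add_apply, hyy] at hpol
    linarith
  ext x y z w
  linarith [hA.bianchi x y z w, hB.bianchi x y z w, hmid y z x w, hmid z x y w,
    hA.antisymm y x z w, hA.antisymm z y x w, hB.antisymm y x z w, hB.antisymm z y x w]

end IsAlgCurvatureTensor

theorem complexJacobiForm_comm_of_invariant (hJ : ∀ x, J (J x) = -x)
    (hA : ∀ x y z w, A (J x) (J y) (J z) (J w) = A x y z w) (x y z : V) :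
    complexJacobiForm J A x y (J z) = -complexJacobiForm J A x (J y) z := by
  simp only [complexJacobiForm, ← hA y, hJ, map_neg, LinearMap.neg_apply, neg_neg, neg_add]
  ring

theorem apply_self_invariant_of_complexJacobiForm_comm (hJ : ∀ x, J (J x) = -x)
    (hpair : ∀ x y z w, A x y z w = A z w x y)
    (h : ∀ x y z, complexJacobiForm J A x y (J z) = -complexJacobiForm J A x (J y) z)
    (x y : V) : A (J x) (J y) (J y) (J x) = A x y y x := by
  have hyx := h y x (J x)
  have hxy := h x y (J y)
  simp only [complexJacobiForm, hJ, map_neg] at hyx hxy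
  linarith [hpair (J y) x x (J y), hpair y (J x) (J x) y, hpair (J y) (J x) (J x) (J y),
    hpair y x x y, hpair x (J y) (J y) x, hpair (J x) y y (J x)]

end

theorem compatible_iff_complexJacobi_commutes_general
    {V : Type*} [NormedAddCommGroup V] [InnerProductSpace ℝ V]
    (J : V →ₗ[ℝ] V) (hJ : ∀ x, J (J x) = -x)
    (A : V →ₗ[ℝ] V →ₗ[ℝ] V →ₗ[ℝ] V →ₗ[ℝ] ℝ)
    (hAanti : ∀ x y z w : V, A x y z w = - A y x z w)
    (hApair : ∀ x y z w : V, A x y z w = A z w x y)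
    (hAbianchi : ∀ x y z w : V, A x y z w + A y z x w + A z x y w = 0) :
    (∀ x y z w : V, A (J x) (J y) (J z) (J w) = A x y z w) ↔
      (∀ x y z : V,
        A y x x (J z) + A y (J x) (J x) (J z)
          = - A (J y) x x z - A (J y) (J x) (J x) z) := by
  have hA : IsAlgCurvatureTensor A := ⟨hAanti, hApair, hAbianchi⟩
  have hcomm : (∀ x y z, complexJacobiForm J A x y (J z) = -complexJacobiForm J A x (J y) z) ↔
      ∀ x y z : V, A y x x (J z) + A y (J x) (J x) (J z)
        = - A (J y) x x z - A (J y) (J x) (J x) z := by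
    simp only [complexJacobiForm, neg_add']
  rw [← hcomm]
  refine ⟨complexJacobiForm_comm_of_invariant hJ, fun h => ?_⟩
  have hpull : pullback₄ J A = A := (hA.pullback₄ J).ext_of_apply_self hA
    (apply_self_invariant_of_complexJacobiForm_comm hJ hApair h)
  exact fun x y z w => congr($hpull x y z w)

/-- A complex model is compatible iff the complex Jacobi operator
commutes with `J` for every complex line. -/
theorem compatible_iff_complexJacobi_commutes
    {V : Type*} [NormedAddCommGroup V] [InnerProductSpace ℝ V] [FiniteDimensional ℝ V]
    (J : V →ₗ[ℝ] V) (hJ : ∀ x, J (J x) = -x)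
    (hJiso : ∀ x y : V, ⟪J x, J y⟫ = ⟪x, y⟫)
    (A : V →ₗ[ℝ] V →ₗ[ℝ] V →ₗ[ℝ] V →ₗ[ℝ] ℝ)
    (hAanti : ∀ x y z w : V, A x y z w = - A y x z w)
    (hApair : ∀ x y z w : V, A x y z w = A z w x y)
    (hAbianchi : ∀ x y z w : V, A x y z w + A y z x w + A z x y w = 0) :
    (∀ x y z w : V, A (J x) (J y) (J z) (J w) = A x y z w) ↔
      (∀ x y z : V,
        A y x x (J z) + A y (J x) (J x) (J z)
          = - A (J y) x x z - A (J y) (J x) (J x) z) :=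
  compatible_iff_complexJacobi_commutes_general J hJ A hAanti hApair hAbianchi
end

section
/- Let (V, ⟨·,·⟩, J, A) be a complex model. Then A(Jx, Jy, Jz, Jw) = A(x, y, z, w) holds for all x, y, z, w ∈ V if and only if the complex curvature operator commutes with J for every complex line, i.e. if and only if A(x, Jx, y, Jz) + A(x, Jx, Jy, z) = 0 for all x, y, z ∈ V. -/
/-!
Write `B x (y, z) = A x (J x) y z`. The commuting condition says exactly that each `B x` is
`J`-invariant. By pair symmetry `x ↦ A z w x (J x)` is then unchanged when `(z, w)` is replaced by
`(J z, J w)`, and polarising this quadratic form shows that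
`(x, y) ↦ A (J z) (J w) x (J y) - A z w x (J y)` is alternating. Substituting `J y` for `y` gives
`a + b = c + d` for `a = A(Jz,Jw,Jx,Jy)`, `b = A(Jz,Jw,x,y)`, `c = A(z,w,Jx,Jy)`, `d = A(z,w,x,y)`;
the same identity with the pairs `(z, w)` and `(x, y)` exchanged reads `a + c = b + d`, so `a = d`.
-/

open scoped RealInnerProductSpace

section

variable {R M : Type*} [CommRing R] [AddCommGroup M] [Module R M]
  {A : M →ₗ[R] M →ₗ[R] M →ₗ[R] M →ₗ[R] R} {J : M →ₗ[R] M}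

theorem eq_neg_swap_last (hAanti : ∀ x y z w : M, A x y z w = -A y x z w)
    (hApair : ∀ x y z w : M, A x y z w = A z w x y) (x y z w : M) :
    A x y z w = -A x y w z := by
  rw [hApair x y z w, hAanti z w x y, hApair w z x y]

theorem complexCurvOp_commutes_of_invariant (hJ : ∀ x, J (J x) = -x)
    (hAanti : ∀ x y z w : M, A x y z w = -A y x z w)
    (hinv : ∀ x y z w : M, A (J x) (J y) (J z) (J w) = A x y z w) (x y z : M) :
    A x (J x) y (J z) + A x (J x) (J y) z = 0 := by
  have h := hinv x (J x) (J y) z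
  simp only [hJ, map_neg, LinearMap.neg_apply, neg_neg, hAanti (J x) x] at h
  rw [← h, add_neg_cancel]

theorem apply_J_J_of_complexCurvOp_commutes (hJ : ∀ x, J (J x) = -x)
    (H : ∀ x y z : M, A x (J x) y (J z) + A x (J x) (J y) z = 0) (x y z : M) :
    A x (J x) (J y) (J z) = A x (J x) y z := by
  have h := H x y (J z)
  rw [hJ, map_neg] at h
  exact (neg_add_eq_zero.mp h).symm

def jDefect (A : M →ₗ[R] M →ₗ[R] M →ₗ[R] M →ₗ[R] R) (J : M →ₗ[R] M) (z w : M) :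
    M →ₗ[R] M →ₗ[R] R :=
  (A (J z) (J w)).compl₂ J - (A z w).compl₂ J

theorem isAlt_jDefect (hJ : ∀ x, J (J x) = -x)
    (hApair : ∀ x y z w : M, A x y z w = A z w x y)
    (H : ∀ x y z : M, A x (J x) y (J z) + A x (J x) (J y) z = 0) (z w : M) :
    (jDefect A J z w).IsAlt := by
  intro x
  simp only [jDefect, LinearMap.sub_apply, LinearMap.compl₂_apply, hApair _ _ x (J x),
    apply_J_J_of_complexCurvOp_commutes hJ H, sub_self]

theorem add_apply_J_J_eq (hJ : ∀ x, J (J x) = -x)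
    (hAanti : ∀ x y z w : M, A x y z w = -A y x z w)
    (hApair : ∀ x y z w : M, A x y z w = A z w x y)
    (H : ∀ x y z : M, A x (J x) y (J z) + A x (J x) (J y) z = 0) (z w x y : M) :
    A (J z) (J w) (J x) (J y) + A (J z) (J w) x y = A z w (J x) (J y) + A z w x y := by
  have h := (isAlt_jDefect hJ hApair H z w).neg x (J y)
  simp only [jDefect, LinearMap.sub_apply, LinearMap.compl₂_apply, hJ, map_neg,
    eq_neg_swap_last hAanti hApair _ _ (J y) (J x)] at h
  linear_combination h

theorem invariant_of_complexCurvOp_commutes [IsAddTorsionFree R] (hJ : ∀ x, J (J x) = -x)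
    (hAanti : ∀ x y z w : M, A x y z w = -A y x z w)
    (hApair : ∀ x y z w : M, A x y z w = A z w x y)
    (H : ∀ x y z : M, A x (J x) y (J z) + A x (J x) (J y) z = 0) (x y z w : M) :
    A (J x) (J y) (J z) (J w) = A x y z w := by
  have h₁ := add_apply_J_J_eq hJ hAanti hApair H z w x y
  have h₂ := add_apply_J_J_eq hJ hAanti hApair H x y z w
  rw [hApair (J z), hApair (J z), hApair z w (J x), hApair z w x] at h₁
  refine nsmul_right_injective two_ne_zero ?_
  simp only [two_nsmul]
  linear_combination h₁ + h₂

end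

theorem compatible_iff_complexCurvOp_commutes_general
    {V : Type*} [NormedAddCommGroup V] [InnerProductSpace ℝ V]
    (J : V →ₗ[ℝ] V) (hJ : ∀ x, J (J x) = -x)
    (A : V →ₗ[ℝ] V →ₗ[ℝ] V →ₗ[ℝ] V →ₗ[ℝ] ℝ)
    (hAanti : ∀ x y z w : V, A x y z w = - A y x z w)
    (hApair : ∀ x y z w : V, A x y z w = A z w x y) :
    (∀ x y z w : V, A (J x) (J y) (J z) (J w) = A x y z w) ↔
      (∀ x y z : V, A x (J x) y (J z) + A x (J x) (J y) z = 0) :=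
  ⟨complexCurvOp_commutes_of_invariant hJ hAanti,
    invariant_of_complexCurvOp_commutes hJ hAanti hApair⟩

/-- A complex model is compatible iff the complex curvature operator
commutes with `J` for every complex line. -/
theorem compatible_iff_complexCurvOp_commutes
    {V : Type*} [NormedAddCommGroup V] [InnerProductSpace ℝ V] [FiniteDimensional ℝ V]
    (J : V →ₗ[ℝ] V) (hJ : ∀ x, J (J x) = -x)
    (hJiso : ∀ x y : V, ⟪J x, J y⟫ = ⟪x, y⟫)
    (A : V →ₗ[ℝ] V →ₗ[ℝ] V →ₗ[ℝ] V →ₗ[ℝ] ℝ)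
    (hAanti : ∀ x y z w : V, A x y z w = - A y x z w)
    (hApair : ∀ x y z w : V, A x y z w = A z w x y)
    (hAbianchi : ∀ x y z w : V, A x y z w + A y z x w + A z x y w = 0) :
    (∀ x y z w : V, A (J x) (J y) (J z) (J w) = A x y z w) ↔
      (∀ x y z : V, A x (J x) y (J z) + A x (J x) (J y) z = 0) :=
  compatible_iff_complexCurvOp_commutes_general J hJ A hAanti hApair
end

section
/- (Vanhecke) Let (V, ⟨·,·⟩, J, A) be a compatible complex model. Then for all x, y ∈ V: 32·A(x,y,y,x) = 3Q(x+Jy) + 3Q(x−Jy) − Q(x+y) − Q(x−y) − 4Q(x) − 4Q(y) + 4{5λ(x,y) + λ(x,Jy)}, where Q(v) := A(v, Jv, Jv, v) and λ(x,y) := A(x,y,y,x) − A(x,y,Jy,Jx). -/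
/-!
Both sides are quartic forms in `(x, y)` whose `(4,0)`, `(0,4)` and odd-degree parts cancel, so
only the `(2,2)`-parts matter. Polarizing `Q` expresses `Q (x + y) + Q (x - y)` through `Q x`, `Q y`
and the three quantities `A x (J y) (J y) x`, `A x y (J y) (J x)`, `A x (J y) y (J x)`; one use of the
Bianchi identity and of `J`-invariance suffices for this. Replacing `y` by `J y` permutes these
quantities up to sign, and the formula is a linear identity between the resulting expressions.
-/

open scoped RealInnerProductSpace

structure IsCurvatureTensor {R M : Type*} [CommRing R] [AddCommGroup M] [Module R M]
    (A : M →ₗ[R] M →ₗ[R] M →ₗ[R] M →ₗ[R] R) : Prop where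
  antisymm : ∀ x y z w, A x y z w = -A y x z w
  pair_symm : ∀ x y z w, A x y z w = A z w x y
  bianchi : ∀ x y z w, A x y z w + A y z x w + A z x y w = 0

/-- The holomorphic sectional curvature of `v`, without the normalization by `‖v‖ ^ 4`. -/
def holCurvature {R M : Type*} [CommRing R] [AddCommGroup M] [Module R M]
    (A : M →ₗ[R] M →ₗ[R] M →ₗ[R] M →ₗ[R] R) (J : M →ₗ[R] M) (v : M) : R :=
  A v (J v) (J v) v

section

variable {R M : Type*} [CommRing R] [AddCommGroup M] [Module R M]
  {A : M →ₗ[R] M →ₗ[R] M →ₗ[R] M →ₗ[R] R} {J : M →ₗ[R] M}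

theorem map_sub_apply₃ (x y b c d : M) : A (x - y) b c d = A x b c d - A y b c d := by
  rw [eq_sub_iff_add_eq, ← LinearMap.add_apply, ← LinearMap.add_apply, ← LinearMap.add_apply,
    ← map_add, sub_add_cancel]

theorem holCurvature_add_add_holCurvature_sub (x y : M) :
    holCurvature A J (x + y) + holCurvature A J (x - y) =
      2 * holCurvature A J x + 2 * holCurvature A J y +
        2 * (A x (J x) (J y) y + A x (J y) (J x) y + A x (J y) (J y) x +
          A y (J x) (J x) y + A y (J x) (J y) x + A y (J y) (J x) x) := by
  simp only [holCurvature, map_add, map_sub, map_sub_apply₃, LinearMap.add_apply,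
    LinearMap.sub_apply]
  ring

theorem apply_J_left_J_right (hJ : ∀ x, J (J x) = -x)
    (hAJ : ∀ x y z w, A (J x) (J y) (J z) (J w) = A x y z w) (a b c d : M) :
    A (J a) b c (J d) = A a (J b) (J c) d := by
  simpa [hJ] using hAJ a (J b) (J c) d

theorem holCurvature_J (hJ : ∀ x, J (J x) = -x)
    (hAJ : ∀ x y z w, A (J x) (J y) (J z) (J w) = A x y z w) (y : M) :
    holCurvature A J (J y) = holCurvature A J y := by
  rw [holCurvature, holCurvature, apply_J_left_J_right hJ hAJ, hJ (J y)]
  simp only [map_neg, LinearMap.neg_apply, neg_neg]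

namespace IsCurvatureTensor

variable (hA : IsCurvatureTensor A)
include hA

theorem antisymm_right (x y z w : M) : A x y z w = -A x y w z := by
  rw [hA.pair_symm, hA.antisymm, hA.pair_symm]

theorem apply_eq_sub_of_bianchi (a b c d : M) : A a b c d = A a d c b - A a c d b := by
  linear_combination hA.pair_symm a b c d + hA.bianchi c d a b - hA.antisymm d a c b

variable (hJ : ∀ x, J (J x) = -x) (hAJ : ∀ x y z w, A (J x) (J y) (J z) (J w) = A x y z w)
include hJ hAJ

theorem holCurvature_add_add_holCurvature_sub_eq (x y : M) :
    holCurvature A J (x + y) + holCurvature A J (x - y) =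
      2 * holCurvature A J x + 2 * holCurvature A J y +
        4 * (A x (J y) (J y) x + A x y (J y) (J x) - 2 * A x (J y) y (J x)) := by
  have h₁ := hA.apply_eq_sub_of_bianchi x (J x) (J y) y
  have h₂ : A y (J y) (J x) x = A x (J x) (J y) y := by
    rw [hA.pair_symm y, hA.antisymm (J x), hA.antisymm_right x (J x) y, neg_neg]
  have h₃ := hA.antisymm_right x (J y) (J x) y
  have h₄ : A y (J x) (J y) x = A x (J y) (J x) y := by
    rw [hA.pair_symm y, hA.antisymm (J y), hA.antisymm_right x (J y) y, neg_neg]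
  have h₅ : A y (J x) (J x) y = A x (J y) (J y) x := by
    rw [← apply_J_left_J_right hJ hAJ, hA.pair_symm]
  rw [holCurvature_add_add_holCurvature_sub]
  linear_combination 4 * h₁ + 2 * h₂ + 4 * h₃ + 2 * h₄ + 2 * h₅

end IsCurvatureTensor

end

theorem vanhecke_formula_general
    {V : Type*} [NormedAddCommGroup V] [InnerProductSpace ℝ V]
    (J : V →ₗ[ℝ] V) (hJ : ∀ x, J (J x) = -x)
    (A : V →ₗ[ℝ] V →ₗ[ℝ] V →ₗ[ℝ] V →ₗ[ℝ] ℝ)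
    (hAanti : ∀ x y z w : V, A x y z w = - A y x z w)
    (hApair : ∀ x y z w : V, A x y z w = A z w x y)
    (hAbianchi : ∀ x y z w : V, A x y z w + A y z x w + A z x y w = 0)
    (hcompat : ∀ x y z w : V, A (J x) (J y) (J z) (J w) = A x y z w)
    (Q : V → ℝ) (hQ : ∀ v, Q v = A v (J v) (J v) v)
    (lam : V → V → ℝ) (hlam : ∀ x y, lam x y = A x y y x - A x y (J y) (J x)) :
    ∀ x y : V,
      32 * A x y y x =
        3 * Q (x + J y) + 3 * Q (x - J y) - Q (x + y) - Q (x - y)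
          - 4 * Q x - 4 * Q y + 4 * (5 * lam x y + lam x (J y)) := by
  intro x y
  have hA : IsCurvatureTensor A := ⟨hAanti, hApair, hAbianchi⟩
  obtain rfl : Q = holCurvature A J := funext hQ
  have hxy := hA.holCurvature_add_add_holCurvature_sub_eq hJ hcompat x y
  have hxJy := hA.holCurvature_add_add_holCurvature_sub_eq hJ hcompat x (J y)
  simp only [hJ, map_neg, LinearMap.neg_apply, neg_neg, holCurvature_J hJ hcompat] at hxJy
  simp only [hlam, hJ, map_neg, LinearMap.neg_apply]
  linear_combination (-3) * hxJy + hxy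

/-- Vanhecke: in a compatible complex model, `A(x,y,y,x)` is determined
by the holomorphic sectional curvature `Q(v) := A(v,Jv,Jv,v)` together with the tensor
`λ(x,y) := A(x,y,y,x) - A(x,y,Jy,Jx)`. -/
theorem vanhecke_formula
    {V : Type*} [NormedAddCommGroup V] [InnerProductSpace ℝ V] [FiniteDimensional ℝ V]
    (J : V →ₗ[ℝ] V) (hJ : ∀ x, J (J x) = -x)
    (hJiso : ∀ x y : V, ⟪J x, J y⟫ = ⟪x, y⟫)
    (A : V →ₗ[ℝ] V →ₗ[ℝ] V →ₗ[ℝ] V →ₗ[ℝ] ℝ)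
    (hAanti : ∀ x y z w : V, A x y z w = - A y x z w)
    (hApair : ∀ x y z w : V, A x y z w = A z w x y)
    (hAbianchi : ∀ x y z w : V, A x y z w + A y z x w + A z x y w = 0)
    (hcompat : ∀ x y z w : V, A (J x) (J y) (J z) (J w) = A x y z w)
    (Q : V → ℝ) (hQ : ∀ v, Q v = A v (J v) (J v) v)
    (lam : V → V → ℝ) (hlam : ∀ x y, lam x y = A x y y x - A x y (J y) (J x)) :
    ∀ x y : V,
      32 * A x y y x =
        3 * Q (x + J y) + 3 * Q (x - J y) - Q (x + y) - Q (x - y)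
          - 4 * Q x - 4 * Q y + 4 * (5 * lam x y + lam x (J y)) :=
  vanhecke_formula_general J hJ A hAanti hApair hAbianchi hcompat Q hQ lam hlam
end

section
/- (Sato) Let (V, ⟨·,·⟩, J, A) be a compatible complex model with constant zero holomorphic sectional curvature, i.e. A(x, Jx, Jx, x) = 0 for all x ∈ V. Then for all x, y, z, w ∈ V: 3A(x,y,z,w) + 3A(x,y,Jz,Jw) = A(x,z,Jw,Jy) − A(x,w,Jz,Jy) − A(x,Jz,w,Jy) + A(x,Jw,z,Jy). -/
/-!
Put `T a b c d := A a (J b) (J c) d`. Pair symmetry and `J`-invariance make `T` invariant under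
the Klein four-group acting on its slots, so polarizing the vanishing quartic form
`T x x x x = A x (J x) (J x) x` shows that the sum of `T a b c d` over the six orderings of
`b, c, d` vanishes. Sato's identity is the difference of two instances of this six-term identity,
at `(x, J y, J z, w)` and `(x, J y, z, J w)`, corrected by the first Bianchi identity in the last
three slots at `(y, z, w)` and `(y, J z, J w)`.
-/

open scoped RealInnerProductSpace

namespace LinearMap

variable {𝕜 V : Type*} [Field 𝕜] [CharZero 𝕜] [AddCommGroup V] [Module 𝕜 V]
  {T : V →ₗ[𝕜] V →ₗ[𝕜] V →ₗ[𝕜] V →ₗ[𝕜] 𝕜}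

theorem pairings_eq_zero_of_diag_eq_zero
    (hswap : ∀ a b c d, T a b c d = T b a d c) (hrev : ∀ a b c d, T a b c d = T d c b a)
    (hdiag : ∀ x, T x x x x = 0) (a b : V) :
    T a a b b + T a b a b + T a b b a = 0 := by
  -- Not `a - b`: `map_sub` in the first slot needs an `AddCommGroup` instance on the iterated
  -- hom type that instance search fails to find.
  have hadd := hdiag (a + b)
  have hsub := hdiag (a + (-1 : 𝕜) • b)
  simp only [map_add, map_smul, add_apply, smul_apply, smul_eq_mul] at hadd hsub
  -- The terms of odd degree in `b` cancel in `hadd + hsub`.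
  linear_combination (hadd + hsub - 2 * hdiag a - 2 * hdiag b) / 4
    - (hswap b a a b + hswap b a b a + hrev b b a a) / 2

theorem sum_perm_eq_zero_of_diag_eq_zero
    (hswap : ∀ a b c d, T a b c d = T b a d c) (hrev : ∀ a b c d, T a b c d = T d c b a)
    (hdiag : ∀ x, T x x x x = 0) (a b c d : V) :
    T a b c d + T a b d c + T a c b d + T a c d b + T a d b c + T a d c b = 0 := by
  have hpair := pairings_eq_zero_of_diag_eq_zero hswap hrev hdiag
  have hlin : ∀ b, T a c b b + T a b c b + T a b b c = 0 := fun b => by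
    have h := hpair (a + c) b
    simp only [map_add, add_apply] at h
    linear_combination (h - hpair a b - hpair c b
      - hswap c a b b - hswap c b a b - hrev b c b a - hrev c b b a) / 2
  have h := hlin (b + d)
  simp only [map_add, add_apply] at h
  linear_combination h - hlin b - hlin d

end LinearMap

section CurvatureTensor

variable {R V : Type*} [CommRing R] [AddCommGroup V] [Module R V]
  {J : V →ₗ[R] V} {A : V →ₗ[R] V →ₗ[R] V →ₗ[R] V →ₗ[R] R}

variable (J A) in
def holomorphicForm : V →ₗ[R] V →ₗ[R] V →ₗ[R] V →ₗ[R] R :=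
  (A.compl₂ J).compr₂ (LinearMap.lcomp R _ J)

@[simp]
theorem holomorphicForm_apply (a b c d : V) :
    holomorphicForm J A a b c d = A a (J b) (J c) d :=
  rfl

theorem curvature_skew_right (hanti : ∀ x y z w, A x y z w = -A y x z w)
    (hpair : ∀ x y z w, A x y z w = A z w x y) (x y z w : V) :
    A x y z w = -A x y w z := by
  rw [hpair, hanti, hpair]

theorem curvature_bianchi_right (hanti : ∀ x y z w, A x y z w = -A y x z w)
    (hpair : ∀ x y z w, A x y z w = A z w x y)
    (hbianchi : ∀ x y z w, A x y z w + A y z x w + A z x y w = 0) (x y z w : V) :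
    A x y z w + A x z w y + A x w y z = 0 := by
  have h := hbianchi y z w x
  rw [hpair y z, hpair z w, hpair w y, hanti w x, hanti y x, hanti z x] at h
  linear_combination -h

theorem holomorphicForm_rev (hanti : ∀ x y z w, A x y z w = -A y x z w)
    (hpair : ∀ x y z w, A x y z w = A z w x y) (a b c d : V) :
    holomorphicForm J A a b c d = holomorphicForm J A d c b a := by
  simp only [holomorphicForm_apply]
  rw [hpair, hanti, curvature_skew_right hanti hpair, neg_neg]

theorem holomorphicForm_swap (hJ : ∀ x, J (J x) = -x)
    (hanti : ∀ x y z w, A x y z w = -A y x z w) (hpair : ∀ x y z w, A x y z w = A z w x y)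
    (hcompat : ∀ x y z w, A (J x) (J y) (J z) (J w) = A x y z w) (a b c d : V) :
    holomorphicForm J A a b c d = holomorphicForm J A b a d c := by
  simp only [holomorphicForm_apply]
  rw [← hcompat, hJ, hJ]
  simp only [map_neg, LinearMap.neg_apply, neg_neg]
  rw [hanti, curvature_skew_right hanti hpair, neg_neg]

end CurvatureTensor

theorem curvature_sum_perm_eq_zero_of_holomorphic_eq_zero {𝕜 V : Type*} [Field 𝕜] [CharZero 𝕜]
    [AddCommGroup V] [Module 𝕜 V] {J : V →ₗ[𝕜] V} {A : V →ₗ[𝕜] V →ₗ[𝕜] V →ₗ[𝕜] V →ₗ[𝕜] 𝕜}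
    (hJ : ∀ x, J (J x) = -x) (hanti : ∀ x y z w, A x y z w = -A y x z w)
    (hpair : ∀ x y z w, A x y z w = A z w x y)
    (hcompat : ∀ x y z w, A (J x) (J y) (J z) (J w) = A x y z w)
    (hhol : ∀ x, A x (J x) (J x) x = 0) (a b c d : V) :
    A a (J b) (J c) d + A a (J b) (J d) c + A a (J c) (J b) d + A a (J c) (J d) b +
      A a (J d) (J b) c + A a (J d) (J c) b = 0 :=
  LinearMap.sum_perm_eq_zero_of_diag_eq_zero (holomorphicForm_swap hJ hanti hpair hcompat)
    (holomorphicForm_rev hanti hpair) hhol a b c d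

theorem sato_identity_zero_holomorphic_curvature_general
    {V : Type*} [NormedAddCommGroup V] [InnerProductSpace ℝ V]
    (J : V →ₗ[ℝ] V) (hJ : ∀ x, J (J x) = -x)
    (A : V →ₗ[ℝ] V →ₗ[ℝ] V →ₗ[ℝ] V →ₗ[ℝ] ℝ)
    (hAanti : ∀ x y z w : V, A x y z w = - A y x z w)
    (hApair : ∀ x y z w : V, A x y z w = A z w x y)
    (hAbianchi : ∀ x y z w : V, A x y z w + A y z x w + A z x y w = 0)
    (hcompat : ∀ x y z w : V, A (J x) (J y) (J z) (J w) = A x y z w)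
    (hQ : ∀ x : V, A x (J x) (J x) x = 0) :
    ∀ x y z w : V,
      3 * A x y z w + 3 * A x y (J z) (J w) =
        A x z (J w) (J y) - A x w (J z) (J y) - A x (J z) w (J y) + A x (J w) z (J y) := by
  intro x y z w
  have hsum := curvature_sum_perm_eq_zero_of_holomorphic_eq_zero hJ hAanti hApair hcompat hQ x
  have h₁ := hsum (J y) (J z) w
  have h₂ := hsum (J y) z (J w)
  simp only [hJ, map_neg, LinearMap.neg_apply, neg_neg] at h₁ h₂
  have hbianchi := curvature_bianchi_right hAanti hApair hAbianchi x
  have hskew := curvature_skew_right hAanti hApair x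
  linear_combination h₁ - h₂ + hbianchi y z w + hbianchi y (J z) (J w)
    + hskew y z w + hskew y (J z) (J w) - hskew (J z) y (J w) - hskew z y w

/-- Sato: identity for a compatible complex model with constant zero
holomorphic sectional curvature. -/
theorem sato_identity_zero_holomorphic_curvature
    {V : Type*} [NormedAddCommGroup V] [InnerProductSpace ℝ V] [FiniteDimensional ℝ V]
    (J : V →ₗ[ℝ] V) (hJ : ∀ x, J (J x) = -x)
    (hJiso : ∀ x y : V, ⟪J x, J y⟫ = ⟪x, y⟫)
    (A : V →ₗ[ℝ] V →ₗ[ℝ] V →ₗ[ℝ] V →ₗ[ℝ] ℝ)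
    (hAanti : ∀ x y z w : V, A x y z w = - A y x z w)
    (hApair : ∀ x y z w : V, A x y z w = A z w x y)
    (hAbianchi : ∀ x y z w : V, A x y z w + A y z x w + A z x y w = 0)
    (hcompat : ∀ x y z w : V, A (J x) (J y) (J z) (J w) = A x y z w)
    (hQ : ∀ x : V, A x (J x) (J x) x = 0) :
    ∀ x y z w : V,
      3 * A x y z w + 3 * A x y (J z) (J w) =
        A x z (J w) (J y) - A x w (J z) (J y) - A x (J z) w (J y) + A x (J w) z (J y) :=
  sato_identity_zero_holomorphic_curvature_general J hJ A hAanti hApair hAbianchi hcompat hQ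
end

section
/- Let (V, ⟨·,·⟩, J, A) be a complex model. The complex Jacobi operator vanishes for every complex line, i.e. A(y,x,x,z) + A(y,Jx,Jx,z) = 0 for all x, y, z ∈ V, if and only if the complex curvature operator vanishes for every complex line, i.e. A(x, Jx, z, w) = 0 for all x, z, w ∈ V. -/
/-!
Write `ρ(x, u)(y, z) = A(y, x, u, z) + A(y, u, x, z)` for the polarization of the Jacobi form
`(y, z) ↦ A(y, x, x, z)`. The Bianchi identity recovers the tensor from it,
`3 A(a, b, c, d) = ρ(b, c)(a, d) - ρ(a, c)(b, d)`. If the complex Jacobi operators vanish, then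
`ρ(Jx, Ju) = -ρ(x, u)`; feeding this into the recovery formula for `A(x, Jx, z, w)` leaves a
complex Jacobi operator, hence zero.

Conversely, polarizing `A(x, Jx, ·, ·) = 0` shows `A(Ja, Jb, ·, ·) = -A(a, b, ·, ·)`, and then
one Bianchi identity on `(Jy, x, Jx)` turns `A(y, Jx, Jx, z)` into `-A(y, x, x, z)`.
-/

open scoped RealInnerProductSpace

structure IsAlgCurvatureTensor_s7 {R V : Type*} [CommRing R] [AddCommGroup V] [Module R V]
    (A : V →ₗ[R] V →ₗ[R] V →ₗ[R] V →ₗ[R] R) : Prop where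
  antisymm : ∀ x y z w, A x y z w = - A y x z w
  pair_symm : ∀ x y z w, A x y z w = A z w x y
  bianchi : ∀ x y z w, A x y z w + A y z x w + A z x y w = 0

def jacobiPolar {R V : Type*} [CommRing R] [AddCommGroup V] [Module R V]
    (A : V →ₗ[R] V →ₗ[R] V →ₗ[R] V →ₗ[R] R) (x u y z : V) : R :=
  A y x u z + A y u x z

section CommRing

variable {R V : Type*} [CommRing R] [AddCommGroup V] [Module R V]
  {A : V →ₗ[R] V →ₗ[R] V →ₗ[R] V →ₗ[R] R}

theorem jacobiPolar_neg_left (x u y z : V) :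
    jacobiPolar A (-x) u y z = - jacobiPolar A x u y z := by
  simp only [jacobiPolar, map_neg, LinearMap.neg_apply]; ring

namespace IsAlgCurvatureTensor_s7

variable (hA : IsAlgCurvatureTensor_s7 A)
include hA

theorem three_mul_eq_jacobiPolar_sub (a b c d : V) :
    3 * A a b c d = jacobiPolar A b c a d - jacobiPolar A a c b d := by
  have := hA.bianchi a b c d
  rw [hA.antisymm c a] at this
  rw [jacobiPolar, jacobiPolar, hA.antisymm b a]
  linear_combination this

end IsAlgCurvatureTensor_s7

variable {J : V →ₗ[R] V}

theorem jacobiPolar_add_jacobiPolar_J_eq_zero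
    (h : ∀ x y z : V, A y x x z + A y (J x) (J x) z = 0) (x u y z : V) :
    jacobiPolar A x u y z + jacobiPolar A (J x) (J u) y z = 0 := by
  have hxu := h (x + u) y z
  simp only [map_add, LinearMap.add_apply] at hxu
  rw [jacobiPolar, jacobiPolar]
  linear_combination hxu - h x y z - h u y z

theorem apply_J_J_of_complexCurvOp_eq_zero (hJ : ∀ x, J (J x) = -x)
    (hC : ∀ x z w : V, A x (J x) z w = 0) (a b c d : V) :
    A (J a) (J b) c d = A b a c d := by
  have hab : ∀ a b : V, A a (J b) c d + A b (J a) c d = 0 := fun a b => by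
    have hsum := hC (a + b) c d
    simp only [map_add, LinearMap.add_apply] at hsum
    linear_combination hsum - hC a c d - hC b c d
  have := hab (J a) b
  rw [hJ, map_neg, LinearMap.neg_apply, LinearMap.neg_apply] at this
  linear_combination this

theorem IsAlgCurvatureTensor_s7.complexJacobi_eq_zero_of_complexCurvOp_eq_zero
    (hA : IsAlgCurvatureTensor_s7 A) (hJ : ∀ x, J (J x) = -x)
    (hC : ∀ x z w : V, A x (J x) z w = 0) (x y z : V) :
    A y x x z + A y (J x) (J x) z = 0 := by
  have hJJ := apply_J_J_of_complexCurvOp_eq_zero hJ hC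
  have hy : A y (J x) (J x) z = A (J y) x (J x) z := by
    have := hJJ y (J x) (J x) z
    rw [hJ, map_neg, LinearMap.neg_apply, LinearMap.neg_apply] at this
    linear_combination hA.antisymm y (J x) (J x) z + this
  have hx : A (J x) (J y) x z = A y x x z := hJJ x y x z
  have := hA.bianchi (J y) x (J x) z
  rw [hC, hx] at this
  linear_combination hy + this

end CommRing

theorem IsAlgCurvatureTensor_s7.complexCurvOp_eq_zero_of_complexJacobi_eq_zero
    {K V : Type*} [Field K] [CharZero K] [AddCommGroup V] [Module K V]
    {A : V →ₗ[K] V →ₗ[K] V →ₗ[K] V →ₗ[K] K} {J : V →ₗ[K] V}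
    (hA : IsAlgCurvatureTensor_s7 A) (hJ : ∀ x, J (J x) = -x)
    (h : ∀ x y z : V, A y x x z + A y (J x) (J x) z = 0) (x z w : V) :
    A x (J x) z w = 0 := by
  have hpol := jacobiPolar_add_jacobiPolar_J_eq_zero h
  have hdiag : ∀ a c d : V, A a a c d = 0 := fun a c d => self_eq_neg.mp (hA.antisymm a a c d)
  have h₁ : jacobiPolar A (J x) z x w = A x (J z) x w := by
    have := hpol (J x) z x w
    rw [hJ, jacobiPolar_neg_left] at this
    simp only [jacobiPolar] at this ⊢
    linear_combination this + hdiag x (J z) w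
  have h₂ : jacobiPolar A x z (J x) w = - A (J x) (J z) (J x) w := by
    have := hpol x z (J x) w
    simp only [jacobiPolar] at this ⊢
    linear_combination this - hdiag (J x) (J z) w
  have h₃ : (3 : K) * A x (J x) z w = 0 := by
    rw [hA.three_mul_eq_jacobiPolar_sub, h₁, h₂, hA.antisymm x (J z), hA.antisymm (J x) (J z)]
    linear_combination -h x (J z) w
  exact (mul_eq_zero.mp h₃).resolve_left three_ne_zero

theorem complexJacobi_zero_iff_complexCurvOp_zero_general
    {V : Type*} [NormedAddCommGroup V] [InnerProductSpace ℝ V]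
    (J : V →ₗ[ℝ] V) (hJ : ∀ x, J (J x) = -x)
    (A : V →ₗ[ℝ] V →ₗ[ℝ] V →ₗ[ℝ] V →ₗ[ℝ] ℝ)
    (hAanti : ∀ x y z w : V, A x y z w = - A y x z w)
    (hApair : ∀ x y z w : V, A x y z w = A z w x y)
    (hAbianchi : ∀ x y z w : V, A x y z w + A y z x w + A z x y w = 0) :
    (∀ x y z : V, A y x x z + A y (J x) (J x) z = 0) ↔
      (∀ x z w : V, A x (J x) z w = 0) := by
  have hA : IsAlgCurvatureTensor_s7 A := ⟨hAanti, hApair, hAbianchi⟩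
  exact ⟨hA.complexCurvOp_eq_zero_of_complexJacobi_eq_zero hJ,
    hA.complexJacobi_eq_zero_of_complexCurvOp_eq_zero hJ⟩

/-- the complex Jacobi operator vanishes for every complex line iff the
complex curvature operator vanishes for every complex line. -/
theorem complexJacobi_zero_iff_complexCurvOp_zero
    {V : Type*} [NormedAddCommGroup V] [InnerProductSpace ℝ V] [FiniteDimensional ℝ V]
    (J : V →ₗ[ℝ] V) (hJ : ∀ x, J (J x) = -x)
    (hJiso : ∀ x y : V, ⟪J x, J y⟫ = ⟪x, y⟫)
    (A : V →ₗ[ℝ] V →ₗ[ℝ] V →ₗ[ℝ] V →ₗ[ℝ] ℝ)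
    (hAanti : ∀ x y z w : V, A x y z w = - A y x z w)
    (hApair : ∀ x y z w : V, A x y z w = A z w x y)
    (hAbianchi : ∀ x y z w : V, A x y z w + A y z x w + A z x y w = 0) :
    (∀ x y z : V, A y x x z + A y (J x) (J x) z = 0) ↔
      (∀ x z w : V, A x (J x) z w = 0) :=
  complexJacobi_zero_iff_complexCurvOp_zero_general J hJ A hAanti hApair hAbianchi
end

section
/- Let (V, ⟨·,·⟩, J, A) be a complex model. The complex Jacobi operator vanishes for every complex line, i.e. A(y,x,x,z) + A(y,Jx,Jx,z) = 0 for all x, y, z ∈ V, if and only if A(Jx, y, z, w) = A(x, Jy, z, w) = A(x, y, Jz, w) for all x, y, z, w ∈ V. -/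
/-!
Let `j(x,y,z,w) = A(x,y,z,w) + A(x,z,y,w)` be the polarized Jacobi form. The Bianchi identity
gives `3 A(x,y,z,w) = j(x,y,z,w) - j(x,y,w,z)`, so `J` slides between the slots of `A` as soon as
it slides between the last three slots of `j`. Polarizing the vanishing of the complex Jacobi
operator says `j(x,Jy,Jz,w) = -j(x,y,z,w)`, i.e. `J` slides between the two middle slots of `j`;
the Bianchi identity for `j` then forces it to slide between the last two slots as well.
-/

theorem eq_swap_pairs_of_cyclic {𝕜 α : Type*} [Field 𝕜] [CharZero 𝕜] (k : α → α → α → α → 𝕜)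
    (hcyc : ∀ x y z w, k x y z w + k y z x w + k x z w y = 0) (x y z w : α) :
    k x y z w = k y x w z := by
  linear_combination (1 / 2 : 𝕜) * (hcyc z x y w - hcyc y z x w - hcyc w z y x - hcyc y x w z
    + hcyc y w z x + hcyc x w y z)

section

variable {𝕜 V : Type*} [Field 𝕜] [AddCommGroup V] [Module 𝕜 V]

structure IsAlgebraicCurvatureTensor (A : V →ₗ[𝕜] V →ₗ[𝕜] V →ₗ[𝕜] V →ₗ[𝕜] 𝕜) : Prop where
  antisymm : ∀ x y z w, A x y z w = -A y x z w
  pair_symm : ∀ x y z w, A x y z w = A z w x y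
  bianchi : ∀ x y z w, A x y z w + A y z x w + A z x y w = 0

/-- `jacobiForm A x y y w = 2 ⟪𝒥(y) x, w⟫`, where `𝒥(y) = A(·, y, y, ·)` is the Jacobi operator. -/
def jacobiForm (A : V →ₗ[𝕜] V →ₗ[𝕜] V →ₗ[𝕜] V →ₗ[𝕜] 𝕜) (x y z w : V) : 𝕜 :=
  A x y z w + A x z y w

theorem jacobiForm_neg_third (A : V →ₗ[𝕜] V →ₗ[𝕜] V →ₗ[𝕜] V →ₗ[𝕜] 𝕜) (x y z w : V) :
    jacobiForm A x y (-z) w = -jacobiForm A x y z w := by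
  simp only [jacobiForm, map_neg, LinearMap.neg_apply, neg_add]

theorem jacobiForm_map_map_eq_neg_of_complexJacobi {A : V →ₗ[𝕜] V →ₗ[𝕜] V →ₗ[𝕜] V →ₗ[𝕜] 𝕜}
    {J : V →ₗ[𝕜] V} (h : ∀ x y z : V, A y x x z + A y (J x) (J x) z = 0) (x y z w : V) :
    jacobiForm A x (J y) (J z) w = -jacobiForm A x y z w := by
  have hsum := h (y + z) x w
  simp only [map_add, LinearMap.add_apply] at hsum
  simp only [jacobiForm]
  linear_combination hsum - h y x w - h z x w

theorem jacobiForm_slide_middle_of_complexJacobi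
    {A : V →ₗ[𝕜] V →ₗ[𝕜] V →ₗ[𝕜] V →ₗ[𝕜] 𝕜} {J : V →ₗ[𝕜] V} (hJ : ∀ x, J (J x) = -x)
    (h : ∀ x y z : V, A y x x z + A y (J x) (J x) z = 0) (x y z w : V) :
    jacobiForm A x (J y) z w = jacobiForm A x y (J z) w := by
  have hneg := jacobiForm_map_map_eq_neg_of_complexJacobi h x y (J z) w
  rw [hJ, jacobiForm_neg_third] at hneg
  linear_combination -hneg

theorem complexJacobi_eq_zero_of_J_slides {A : V →ₗ[𝕜] V →ₗ[𝕜] V →ₗ[𝕜] V →ₗ[𝕜] 𝕜}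
    {J : V →ₗ[𝕜] V} (hJ : ∀ x, J (J x) = -x)
    (h : ∀ x y z w : V, A (J x) y z w = A x (J y) z w ∧ A x (J y) z w = A x y (J z) w)
    (x y z : V) : A y x x z + A y (J x) (J x) z = 0 := by
  rw [(h y x (J x) z).2, hJ, map_neg, LinearMap.neg_apply, add_neg_cancel]

namespace IsAlgebraicCurvatureTensor

variable {A : V →ₗ[𝕜] V →ₗ[𝕜] V →ₗ[𝕜] V →ₗ[𝕜] 𝕜} (hA : IsAlgebraicCurvatureTensor A)
include hA

theorem antisymm_right (x y z w : V) : A x y z w = -A x y w z := by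
  rw [hA.pair_symm, hA.antisymm, hA.pair_symm w]

theorem jacobiForm_swap_pairs (x y z w : V) : jacobiForm A x y z w = jacobiForm A y x w z := by
  simp only [jacobiForm]
  linear_combination hA.pair_symm x z y w - hA.antisymm x y w z + hA.antisymm_right x y z w

theorem jacobiForm_cyclic (x y z w : V) :
    jacobiForm A x y z w + jacobiForm A y z x w + jacobiForm A z x y w = 0 := by
  simp only [jacobiForm]
  linear_combination hA.bianchi x y z w + hA.bianchi x z y w

theorem three_mul_eq_jacobiForm_sub (x y z w : V) :
    3 * A x y z w = jacobiForm A x y z w - jacobiForm A x y w z := by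
  simp only [jacobiForm]
  linear_combination hA.antisymm w x y z + 2 * hA.antisymm_right x y z w - hA.pair_symm x z y w
    - hA.bianchi w x y z

theorem jacobiForm_slide_right [CharZero 𝕜] {J : V → V}
    (h23 : ∀ x y z w, jacobiForm A x (J y) z w = jacobiForm A x y (J z) w) (x y z w : V) :
    jacobiForm A x y (J z) w = jacobiForm A x y z (J w) := by
  have hcyc : ∀ x y z w,
      jacobiForm A x y (J z) w + jacobiForm A y z (J x) w + jacobiForm A x z (J w) y = 0 := by
    intro x y z w
    rw [← h23 y z x w, ← h23 x z w y, ← hA.jacobiForm_swap_pairs (J z) x y w]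
    exact hA.jacobiForm_cyclic x y (J z) w
  rw [eq_swap_pairs_of_cyclic (fun x y z w ↦ jacobiForm A x y (J z) w) hcyc,
    hA.jacobiForm_swap_pairs y x]

theorem apply_eq_of_jacobiForm_eq [CharZero 𝕜] {x y z w x' y' z' w' : V}
    (h : jacobiForm A x y z w = jacobiForm A x' y' z' w')
    (h' : jacobiForm A x y w z = jacobiForm A x' y' w' z') : A x y z w = A x' y' z' w' := by
  refine mul_left_cancel₀ (three_ne_zero (α := 𝕜)) ?_
  rw [hA.three_mul_eq_jacobiForm_sub, hA.three_mul_eq_jacobiForm_sub, h, h']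

theorem J_slides_of_jacobiForm_slides [CharZero 𝕜] {J : V → V}
    (h23 : ∀ x y z w, jacobiForm A x (J y) z w = jacobiForm A x y (J z) w)
    (h34 : ∀ x y z w, jacobiForm A x y (J z) w = jacobiForm A x y z (J w)) (x y z w : V) :
    A (J x) y z w = A x (J y) z w ∧ A x (J y) z w = A x y (J z) w := by
  have slide34 : ∀ x y z w, A x y (J z) w = A x y z (J w) := fun x y z w ↦
    hA.apply_eq_of_jacobiForm_eq (h34 x y z w) (h34 x y w z).symm
  refine ⟨?_, hA.apply_eq_of_jacobiForm_eq (h23 x y z w) ((h23 x y w z).trans (h34 x y w z))⟩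
  rw [hA.pair_symm, slide34, hA.pair_symm]

end IsAlgebraicCurvatureTensor

end

open scoped RealInnerProductSpace

theorem complexJacobi_zero_iff_J_slides_general
    {V : Type*} [NormedAddCommGroup V] [InnerProductSpace ℝ V]
    (J : V →ₗ[ℝ] V) (hJ : ∀ x, J (J x) = -x)
    (A : V →ₗ[ℝ] V →ₗ[ℝ] V →ₗ[ℝ] V →ₗ[ℝ] ℝ)
    (hAanti : ∀ x y z w : V, A x y z w = - A y x z w)
    (hApair : ∀ x y z w : V, A x y z w = A z w x y)
    (hAbianchi : ∀ x y z w : V, A x y z w + A y z x w + A z x y w = 0) :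
    (∀ x y z : V, A y x x z + A y (J x) (J x) z = 0) ↔
      (∀ x y z w : V,
        A (J x) y z w = A x (J y) z w ∧ A x (J y) z w = A x y (J z) w) := by
  have hA : IsAlgebraicCurvatureTensor A := ⟨hAanti, hApair, hAbianchi⟩
  refine ⟨fun h ↦ ?_, complexJacobi_eq_zero_of_J_slides hJ⟩
  have h23 := jacobiForm_slide_middle_of_complexJacobi hJ h
  exact hA.J_slides_of_jacobiForm_slides h23 (hA.jacobiForm_slide_right h23)

/-- the complex Jacobi operator vanishes for every complex line iff
`A(Jx,y,z,w) = A(x,Jy,z,w) = A(x,y,Jz,w)` for all `x,y,z,w`. -/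
theorem complexJacobi_zero_iff_J_slides
    {V : Type*} [NormedAddCommGroup V] [InnerProductSpace ℝ V] [FiniteDimensional ℝ V]
    (J : V →ₗ[ℝ] V) (hJ : ∀ x, J (J x) = -x)
    (hJiso : ∀ x y : V, ⟪J x, J y⟫ = ⟪x, y⟫)
    (A : V →ₗ[ℝ] V →ₗ[ℝ] V →ₗ[ℝ] V →ₗ[ℝ] ℝ)
    (hAanti : ∀ x y z w : V, A x y z w = - A y x z w)
    (hApair : ∀ x y z w : V, A x y z w = A z w x y)
    (hAbianchi : ∀ x y z w : V, A x y z w + A y z x w + A z x y w = 0) :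
    (∀ x y z : V, A y x x z + A y (J x) (J x) z = 0) ↔
      (∀ x y z w : V,
        A (J x) y z w = A x (J y) z w ∧ A x (J y) z w = A x y (J z) w) :=
  complexJacobi_zero_iff_J_slides_general J hJ A hAanti hApair hAbianchi
end

section
/- Let (V, ⟨·,·⟩, J, A) be a complex model such that the complex Jacobi operator vanishes for every complex line, i.e. A(y,x,x,z) + A(y,Jx,Jx,z) = 0 for all x, y, z ∈ V. Then the model is Ricci flat and ⋆-Ricci flat: for every orthonormal basis {e₁,…,e_m} of V and all x, y ∈ V, Σᵢ A(eᵢ, x, y, eᵢ) = 0 and Σᵢ A(x, Jeᵢ, Jy, eᵢ) = 0. -/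
open scoped RealInnerProductSpace

/-!
The complex Jacobi condition says that the contraction `∑ᵢ A(a, eᵢ, eᵢ, b)` taken in an
orthonormal basis `e` is minus the same contraction taken in the orthonormal basis `J e`.
Such contractions do not depend on the orthonormal basis, so they vanish: this is Ricci
flatness. For the ⋆-Ricci tensor `S = ∑ᵢ A(x, Jeᵢ, Jy, eᵢ)`, the change of basis `e ↦ J e`,
the polarized Jacobi condition and the first Bianchi identity express the three contractions
`S`, `∑ᵢ A(x, eᵢ, Jy, Jeᵢ)`, `∑ᵢ A(x, Jy, eᵢ, Jeᵢ)` in terms of each other, which forces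
`3 S = 0`.
-/

namespace OrthonormalBasis

variable {V : Type*} [NormedAddCommGroup V] [InnerProductSpace ℝ V]

theorem sum_apply_self_eq {ι ι' : Type*} [Fintype ι] [Fintype ι']
    (e : OrthonormalBasis ι ℝ V) (f : OrthonormalBasis ι' ℝ V) (F : V →ₗ[ℝ] V →ₗ[ℝ] ℝ) :
    ∑ i, F (f i) (f i) = ∑ j, F (e j) (e j) := by
  calc ∑ i, F (f i) (f i) = ∑ i, ∑ j, ⟪e j, f i⟫ * F (f i) (e j) := by
        refine Finset.sum_congr rfl fun i _ => ?_
        nth_rewrite 2 [← e.sum_repr' (f i)]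
        simp only [map_sum, map_smul, smul_eq_mul]
    _ = ∑ j, F (∑ i, ⟪f i, e j⟫ • f i) (e j) := by
        rw [Finset.sum_comm]
        simp only [map_sum, map_smul, LinearMap.sum_apply, LinearMap.smul_apply, smul_eq_mul,
          real_inner_comm]
    _ = ∑ j, F (e j) (e j) := by simp only [f.sum_repr']

end OrthonormalBasis

section ComplexModel

variable {V : Type*} [NormedAddCommGroup V] [InnerProductSpace ℝ V] (J : V →ₗ[ℝ] V)

def complexStructureEquiv (hJ : ∀ x, J (J x) = -x) (hJiso : ∀ x y : V, ⟪J x, J y⟫ = ⟪x, y⟫) :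
    V ≃ₗᵢ[ℝ] V :=
  { (LinearEquiv.ofLinearMap J (-J) (by ext x; simp [hJ]) (by ext x; simp [hJ]) : V ≃ₗ[ℝ] V) with
    norm_map' := fun x => by
      simp only [LinearEquiv.coe_ofLinearMap, norm_eq_sqrt_real_inner, hJiso] }

@[simp]
theorem complexStructureEquiv_apply (hJ : ∀ x, J (J x) = -x)
    (hJiso : ∀ x y : V, ⟪J x, J y⟫ = ⟪x, y⟫) (x : V) :
    complexStructureEquiv J hJ hJiso x = J x :=
  rfl

theorem OrthonormalBasis.sum_apply_complexStructure_self (hJ : ∀ x, J (J x) = -x)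
    (hJiso : ∀ x y : V, ⟪J x, J y⟫ = ⟪x, y⟫) {ι : Type*} [Fintype ι]
    (e : OrthonormalBasis ι ℝ V) (F : V →ₗ[ℝ] V →ₗ[ℝ] ℝ) :
    ∑ i, F (J (e i)) (J (e i)) = ∑ i, F (e i) (e i) :=
  e.sum_apply_self_eq (e.map (complexStructureEquiv J hJ hJiso)) F

variable (A : V →ₗ[ℝ] V →ₗ[ℝ] V →ₗ[ℝ] V →ₗ[ℝ] ℝ)

theorem curvature_antisymm_right (hAanti : ∀ x y z w : V, A x y z w = - A y x z w)
    (hApair : ∀ x y z w : V, A x y z w = A z w x y) (a b c d : V) :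
    A a b c d = - A a b d c := by
  rw [hApair, hAanti, hApair d c a b]

theorem complexJacobi_polarization (hvan : ∀ x y z : V, A y x x z + A y (J x) (J x) z = 0)
    (a u v b : V) :
    A a u v b + A a v u b + A a (J u) (J v) b + A a (J v) (J u) b = 0 := by
  have huv := hvan (u + v) a b
  simp only [map_add, LinearMap.add_apply] at huv
  linarith [hvan u a b, hvan v a b]

theorem sum_curvature_basis_basis_eq_zero (hJ : ∀ x, J (J x) = -x)
    (hJiso : ∀ x y : V, ⟪J x, J y⟫ = ⟪x, y⟫) (hvan : ∀ x y z : V, A y x x z + A y (J x) (J x) z = 0)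
    {ι : Type*} [Fintype ι] (f : OrthonormalBasis ι ℝ V) (a b : V) :
    ∑ i, A a (f i) (f i) b = 0 := by
  have hJf := f.sum_apply_complexStructure_self J hJ hJiso ((A a).compr₂ (LinearMap.applyₗ b))
  have hsum : ∑ i, (A a (f i) (f i) b + A a (J (f i)) (J (f i)) b) = 0 := by simp [hvan]
  simp only [LinearMap.compr₂_apply, LinearMap.applyₗ_apply_apply] at hJf
  rw [Finset.sum_add_distrib, hJf] at hsum
  linarith

theorem sum_curvature_basis_apply_basis_eq_zero (hJ : ∀ x, J (J x) = -x)
    (hJiso : ∀ x y : V, ⟪J x, J y⟫ = ⟪x, y⟫) (hAanti : ∀ x y z w : V, A x y z w = - A y x z w)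
    (hApair : ∀ x y z w : V, A x y z w = A z w x y)
    (hvan : ∀ x y z : V, A y x x z + A y (J x) (J x) z = 0)
    {ι : Type*} [Fintype ι] (f : OrthonormalBasis ι ℝ V) (a b : V) :
    ∑ i, A a (f i) b (f i) = 0 := by
  simp only [curvature_antisymm_right A hAanti hApair a (f _) b, Finset.sum_neg_distrib,
    sum_curvature_basis_basis_eq_zero J A hJ hJiso hvan, neg_zero]

theorem sum_curvature_complexStructure_basis_eq_zero (hJ : ∀ x, J (J x) = -x)
    (hJiso : ∀ x y : V, ⟪J x, J y⟫ = ⟪x, y⟫) (hAanti : ∀ x y z w : V, A x y z w = - A y x z w)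
    (hApair : ∀ x y z w : V, A x y z w = A z w x y)
    (hAbianchi : ∀ x y z w : V, A x y z w + A y z x w + A z x y w = 0)
    (hvan : ∀ x y z : V, A y x x z + A y (J x) (J x) z = 0)
    {ι : Type*} [Fintype ι] (e : OrthonormalBasis ι ℝ V) (x y : V) :
    ∑ i, A x (J (e i)) (J y) (e i) = 0 := by
  set S := ∑ i, A x (J (e i)) (J y) (e i)
  have hchange : ∑ i, A x (e i) (J y) (J (e i)) = -S := by
    have h := e.sum_apply_complexStructure_self J hJ hJiso (((A x).flip (J y)).compl₂ J)
    simp only [LinearMap.compl₂_apply, LinearMap.flip_apply, hJ, map_neg,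
      Finset.sum_neg_distrib] at h
    linarith
  have hpolarized : ∑ i, A x (e i) (J y) (J (e i)) + ∑ i, A x (J y) (e i) (J (e i)) = 0 := by
    have hterm : ∀ i, A x (e i) (J y) (J (e i)) + A x (J y) (e i) (J (e i)) =
        A x (J (e i)) y (J (e i)) := by
      intro i
      have h := complexJacobi_polarization J A hvan x (e i) (J y) (J (e i))
      simp only [hJ, map_neg, LinearMap.neg_apply] at h
      linarith [curvature_antisymm_right A hAanti hApair x y (J (e i)) (J (e i))]
    have hJe := sum_curvature_basis_apply_basis_eq_zero J A hJ hJiso hAanti hApair hvan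
      (e.map (complexStructureEquiv J hJ hJiso)) x y
    simp only [OrthonormalBasis.map_apply, complexStructureEquiv_apply] at hJe
    rw [← Finset.sum_add_distrib, Finset.sum_congr rfl fun i _ => hterm i, hJe]
  have hbianchi : ∑ i, A x (J y) (e i) (J (e i)) + S - ∑ i, A x (e i) (J y) (J (e i)) = 0 := by
    have hterm : ∀ i, A x (J y) (e i) (J (e i)) + A x (J (e i)) (J y) (e i)
        - A x (e i) (J y) (J (e i)) = 0 := by
      intro i
      have h := hAbianchi x (J y) (e i) (J (e i))
      rw [hApair (J y) (e i) x (J (e i)), hAanti (e i) x] at h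
      linarith
    rw [← Finset.sum_add_distrib, ← Finset.sum_sub_distrib]
    exact Finset.sum_eq_zero fun i _ => hterm i
  linarith

end ComplexModel

theorem complexJacobi_zero_implies_Ricci_flat_general
    {V : Type*} [NormedAddCommGroup V] [InnerProductSpace ℝ V]
    (J : V →ₗ[ℝ] V) (hJ : ∀ x, J (J x) = -x)
    (hJiso : ∀ x y : V, ⟪J x, J y⟫ = ⟪x, y⟫)
    (A : V →ₗ[ℝ] V →ₗ[ℝ] V →ₗ[ℝ] V →ₗ[ℝ] ℝ)
    (hAanti : ∀ x y z w : V, A x y z w = - A y x z w)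
    (hApair : ∀ x y z w : V, A x y z w = A z w x y)
    (hAbianchi : ∀ x y z w : V, A x y z w + A y z x w + A z x y w = 0)
    (hvan : ∀ x y z : V, A y x x z + A y (J x) (J x) z = 0) :
    ∀ (m : ℕ) (e : OrthonormalBasis (Fin m) ℝ V) (x y : V),
      (∑ i, A (e i) x y (e i) = 0) ∧ (∑ i, A x (J (e i)) (J y) (e i) = 0) := by
  intro m e x y
  refine ⟨?_, sum_curvature_complexStructure_basis_eq_zero J A hJ hJiso hAanti hApair hAbianchi
    hvan e x y⟩
  simp only [hAanti (e _) x, Finset.sum_neg_distrib, neg_eq_zero]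
  exact sum_curvature_basis_apply_basis_eq_zero J A hJ hJiso hAanti hApair hvan e x y

/-- if the complex Jacobi operator vanishes for every complex line, the
model is Ricci flat and ⋆-Ricci flat. -/
theorem complexJacobi_zero_implies_Ricci_flat
    {V : Type*} [NormedAddCommGroup V] [InnerProductSpace ℝ V] [FiniteDimensional ℝ V]
    (J : V →ₗ[ℝ] V) (hJ : ∀ x, J (J x) = -x)
    (hJiso : ∀ x y : V, ⟪J x, J y⟫ = ⟪x, y⟫)
    (A : V →ₗ[ℝ] V →ₗ[ℝ] V →ₗ[ℝ] V →ₗ[ℝ] ℝ)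
    (hAanti : ∀ x y z w : V, A x y z w = - A y x z w)
    (hApair : ∀ x y z w : V, A x y z w = A z w x y)
    (hAbianchi : ∀ x y z w : V, A x y z w + A y z x w + A z x y w = 0)
    (hvan : ∀ x y z : V, A y x x z + A y (J x) (J x) z = 0) :
    ∀ (m : ℕ) (e : OrthonormalBasis (Fin m) ℝ V) (x y : V),
      (∑ i, A (e i) x y (e i) = 0) ∧ (∑ i, A x (J (e i)) (J y) (e i) = 0) :=
  complexJacobi_zero_implies_Ricci_flat_general J hJ hJiso A hAanti hApair hAbianchi hvan
end

section
/- Let (V, ⟨·,·⟩, J, A) be a compatible complex model, i.e. A(Jx,Jy,Jz,Jw) = A(x,y,z,w) for all x,y,z,w. Then the ⋆-Ricci tensor is symmetric: for every orthonormal basis {e₁,…,e_m} of V and all x, y ∈ V, Σᵢ A(x, Jeᵢ, Jy, eᵢ) = Σᵢ A(y, Jeᵢ, Jx, eᵢ). -/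
open scoped RealInnerProductSpace

theorem apply_apply_J_apply_J_comm {R V : Type*} [CommRing R] [AddCommGroup V] [Module R V]
    (J : V →ₗ[R] V) (hJ : ∀ x, J (J x) = -x)
    (A : V →ₗ[R] V →ₗ[R] V →ₗ[R] V →ₗ[R] R)
    (hApair : ∀ x y z w : V, A x y z w = A z w x y)
    (hcompat : ∀ x y z w : V, A (J x) (J y) (J z) (J w) = A x y z w) (x y u : V) :
    A x (J u) (J y) u = A y (J u) (J x) u := by
  calc A x (J u) (J y) u = A (J x) (J (J u)) (J (J y)) (J u) := (hcompat _ _ _ _).symm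
    _ = A (J x) u y (J u) := by simp only [hJ, map_neg, LinearMap.neg_apply, neg_neg]
    _ = A y (J u) (J x) u := hApair _ _ _ _

theorem starRicci_symmetric_of_compatible_general
    {V : Type*} [NormedAddCommGroup V] [InnerProductSpace ℝ V]
    (J : V →ₗ[ℝ] V) (hJ : ∀ x, J (J x) = -x)
    (A : V →ₗ[ℝ] V →ₗ[ℝ] V →ₗ[ℝ] V →ₗ[ℝ] ℝ)
    (hApair : ∀ x y z w : V, A x y z w = A z w x y)
    (hcompat : ∀ x y z w : V, A (J x) (J y) (J z) (J w) = A x y z w) :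
    ∀ (m : ℕ) (e : OrthonormalBasis (Fin m) ℝ V) (x y : V),
      ∑ i, A x (J (e i)) (J y) (e i) = ∑ i, A y (J (e i)) (J x) (e i) :=
  fun _ e x y => Finset.sum_congr rfl fun i _ =>
    apply_apply_J_apply_J_comm J hJ A hApair hcompat x y (e i)

/-- the ⋆-Ricci tensor of a compatible complex model is symmetric. -/
theorem starRicci_symmetric_of_compatible
    {V : Type*} [NormedAddCommGroup V] [InnerProductSpace ℝ V] [FiniteDimensional ℝ V]
    (J : V →ₗ[ℝ] V) (hJ : ∀ x, J (J x) = -x)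
    (hJiso : ∀ x y : V, ⟪J x, J y⟫ = ⟪x, y⟫)
    (A : V →ₗ[ℝ] V →ₗ[ℝ] V →ₗ[ℝ] V →ₗ[ℝ] ℝ)
    (hAanti : ∀ x y z w : V, A x y z w = - A y x z w)
    (hApair : ∀ x y z w : V, A x y z w = A z w x y)
    (hAbianchi : ∀ x y z w : V, A x y z w + A y z x w + A z x y w = 0)
    (hcompat : ∀ x y z w : V, A (J x) (J y) (J z) (J w) = A x y z w) :
    ∀ (m : ℕ) (e : OrthonormalBasis (Fin m) ℝ V) (x y : V),
      ∑ i, A x (J (e i)) (J y) (e i) = ∑ i, A y (J (e i)) (J x) (e i) :=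
  starRicci_symmetric_of_compatible_general J hJ A hApair hcompat
end

section
/- Let V be a nonzero finite-dimensional real inner product space and let J, K be unitary complex structures on V with JK + KJ = 0. For a unitary complex structure L, set A_L(x,y,z,w) := ⟨x,Lw⟩⟨y,Lz⟩ − ⟨x,Lz⟩⟨y,Lw⟩ − 2⟨x,Ly⟩⟨z,Lw⟩. Then A := A_K − A_{JK} is a nonzero algebraic curvature tensor such that, with respect to J, the complex Jacobi operator vanishes for every complex line (A(y,x,x,z) + A(y,Jx,Jx,z) = 0 for all x,y,z) and the complex curvature operator vanishes for every complex line (A(x,Jx,z,w) = 0 for all x,z,w). -/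
open scoped RealInnerProductSpace

/-!
For a skew form `ω`, the tensor `ω(x,w)ω(y,z) - ω(x,z)ω(y,w) - 2ω(x,y)ω(z,w)` is an algebraic
curvature tensor, so `A = A_K - A_{JK}` is one as well, being a difference of two such tensors
for the skew forms `⟪·, K ·⟫` and `⟪·, JK ·⟫`. Precomposing with `J` exchanges these two forms
up to a sign (`⟪J a, K b⟫ = -⟪a, JK b⟫` and `⟪J a, JK b⟫ = ⟪a, K b⟫`), and both complex operators
of `A` cancel under this exchange. Finally `A(x, Kx, Kx, x) = 3‖x‖⁴`, so `A ≠ 0`.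
-/

section SkewCurvatureTensor

variable {V : Type*}

structure IsAlgebraicCurvatureTensor_s12 (A : V → V → V → V → ℝ) : Prop where
  antisymm : ∀ x y z w, A x y z w = -A y x z w
  pair_symm : ∀ x y z w, A x y z w = A z w x y
  bianchi : ∀ x y z w, A x y z w + A y z x w + A z x y w = 0

theorem IsAlgebraicCurvatureTensor_s12.sub {A B : V → V → V → V → ℝ}
    (hA : IsAlgebraicCurvatureTensor_s12 A) (hB : IsAlgebraicCurvatureTensor_s12 B) :
    IsAlgebraicCurvatureTensor_s12 (A - B) where
  antisymm x y z w := by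
    simp only [Pi.sub_apply]; linarith [hA.antisymm x y z w, hB.antisymm x y z w]
  pair_symm x y z w := by
    simp only [Pi.sub_apply]; linarith [hA.pair_symm x y z w, hB.pair_symm x y z w]
  bianchi x y z w := by
    simp only [Pi.sub_apply]; linarith [hA.bianchi x y z w, hB.bianchi x y z w]

def skewCurvatureTensor (ω : V → V → ℝ) (x y z w : V) : ℝ :=
  ω x w * ω y z - ω x z * ω y w - 2 * ω x y * ω z w

variable {ω η : V → V → ℝ}

theorem isAlgebraicCurvatureTensor_skewCurvatureTensor (hω : ∀ a b, ω a b = -ω b a) :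
    IsAlgebraicCurvatureTensor_s12 (skewCurvatureTensor ω) where
  antisymm x y z w := by
    simp only [skewCurvatureTensor]; rw [hω y x]; ring
  pair_symm x y z w := by
    simp only [skewCurvatureTensor]; rw [hω z y, hω w x, hω z x, hω w y]; ring
  bianchi x y z w := by
    simp only [skewCurvatureTensor]; rw [hω y x, hω z x, hω z y]; ring

theorem skewCurvatureTensor_apply_swap_self (hω : ∀ a b, ω a b = -ω b a) (x y : V) :
    skewCurvatureTensor ω x y y x = 3 * ω x y ^ 2 := by
  have hxx : ω x x = 0 := by linarith [hω x x]
  simp only [skewCurvatureTensor]; rw [hxx, hω y x]; ring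

theorem skewCurvatureTensor_sub_apply_add_apply_comp_eq_zero {J : V → V}
    (hω : ∀ a b, ω a b = -ω b a) (hη : ∀ a b, η a b = -η b a)
    (hωJ : ∀ a b, ω (J a) b = -η a b) (hηJ : ∀ a b, η (J a) b = ω a b) (x y z : V) :
    (skewCurvatureTensor ω - skewCurvatureTensor η) y x x z
      + (skewCurvatureTensor ω - skewCurvatureTensor η) y (J x) (J x) z = 0 := by
  have hωJ' : ∀ a b, ω a (J b) = -η a b := fun a b => by rw [hω, hωJ, hη, neg_neg]
  have hηJ' : ∀ a b, η a (J b) = ω a b := fun a b => by rw [hη, hηJ, hω, neg_neg]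
  have hωx : ω x x = 0 := by linarith [hω x x]
  have hηx : η x x = 0 := by linarith [hη x x]
  simp only [Pi.sub_apply, skewCurvatureTensor, hωJ, hηJ, hωJ', hηJ', hωx, hηx]
  ring

theorem skewCurvatureTensor_sub_apply_comp_eq_zero {J : V → V}
    (hω : ∀ a b, ω a b = -ω b a) (hη : ∀ a b, η a b = -η b a)
    (hωJ : ∀ a b, ω (J a) b = -η a b) (hηJ : ∀ a b, η (J a) b = ω a b) (x z w : V) :
    (skewCurvatureTensor ω - skewCurvatureTensor η) x (J x) z w = 0 := by
  have hωJ' : ∀ a b, ω a (J b) = -η a b := fun a b => by rw [hω, hωJ, hη, neg_neg]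
  have hηJ' : ∀ a b, η a (J b) = ω a b := fun a b => by rw [hη, hηJ, hω, neg_neg]
  have hωx : ω x x = 0 := by linarith [hω x x]
  have hηx : η x x = 0 := by linarith [hη x x]
  simp only [Pi.sub_apply, skewCurvatureTensor, hωJ, hηJ, hωJ', hηJ', hωx, hηx]
  ring

end SkewCurvatureTensor

section UnitaryComplexStructure

variable {V : Type*} [SeminormedAddCommGroup V] [InnerProductSpace ℝ V]

structure IsUnitaryComplexStructure (L : V →ₗ[ℝ] V) : Prop where
  apply_apply : ∀ x, L (L x) = -x
  inner_map_map : ∀ x y, ⟪L x, L y⟫ = ⟪x, y⟫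

namespace IsUnitaryComplexStructure

variable {J K L : V →ₗ[ℝ] V}

theorem inner_apply_right (hL : IsUnitaryComplexStructure L) (a b : V) :
    ⟪a, L b⟫ = -⟪b, L a⟫ := by
  rw [← hL.inner_map_map a, hL.apply_apply, inner_neg_right, real_inner_comm]

theorem inner_apply_left (hL : IsUnitaryComplexStructure L) (a b : V) :
    ⟪L a, b⟫ = -⟪a, L b⟫ := by
  rw [real_inner_comm, hL.inner_apply_right]

theorem inner_self_apply (hL : IsUnitaryComplexStructure L) (a : V) : ⟪a, L a⟫ = 0 := by
  linarith [hL.inner_apply_right a a]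

theorem comp (hJ : IsUnitaryComplexStructure J) (hK : IsUnitaryComplexStructure K)
    (hanti : ∀ x, J (K x) + K (J x) = 0) : IsUnitaryComplexStructure (J ∘ₗ K) where
  apply_apply x := by
    have hKJ : K (J (K x)) = -J (K (K x)) := eq_neg_of_add_eq_zero_right (hanti (K x))
    simp only [LinearMap.comp_apply, hKJ, map_neg, hJ.apply_apply, hK.apply_apply, neg_neg]
  inner_map_map x y := by
    simp only [LinearMap.comp_apply, hJ.inner_map_map, hK.inner_map_map]

end IsUnitaryComplexStructure

end UnitaryComplexStructure

theorem exists_nonzero_curvature_with_vanishing_complex_operators_general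
    {V : Type*} [NormedAddCommGroup V] [InnerProductSpace ℝ V]
    [Nontrivial V]
    (J K : V →ₗ[ℝ] V)
    (hJ : ∀ x, J (J x) = -x) (hJiso : ∀ x y : V, ⟪J x, J y⟫ = ⟪x, y⟫)
    (hK : ∀ x, K (K x) = -x) (hKiso : ∀ x y : V, ⟪K x, K y⟫ = ⟪x, y⟫)
    (hanti : ∀ x : V, J (K x) + K (J x) = 0)
    (A : V → V → V → V → ℝ)
    (hA : ∀ x y z w : V, A x y z w =
      (⟪x, K w⟫ * ⟪y, K z⟫ - ⟪x, K z⟫ * ⟪y, K w⟫ - 2 * ⟪x, K y⟫ * ⟪z, K w⟫)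
      - (⟪x, J (K w)⟫ * ⟪y, J (K z)⟫ - ⟪x, J (K z)⟫ * ⟪y, J (K w)⟫
          - 2 * ⟪x, J (K y)⟫ * ⟪z, J (K w)⟫)) :
    A ≠ 0
    ∧ (∀ x y z w : V, A x y z w = - A y x z w)
    ∧ (∀ x y z w : V, A x y z w = A z w x y)
    ∧ (∀ x y z w : V, A x y z w + A y z x w + A z x y w = 0)
    ∧ (∀ x y z : V, A y x x z + A y (J x) (J x) z = 0)
    ∧ (∀ x z w : V, A x (J x) z w = 0) := by
  have hJ' : IsUnitaryComplexStructure J := ⟨hJ, hJiso⟩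
  have hK' : IsUnitaryComplexStructure K := ⟨hK, hKiso⟩
  have hJK' : IsUnitaryComplexStructure (J ∘ₗ K) := hJ'.comp hK' hanti
  have hK_skew : ∀ a b, ⟪a, K b⟫ = -⟪b, K a⟫ := hK'.inner_apply_right
  have hJK_skew : ∀ a b, ⟪a, J (K b)⟫ = -⟪b, J (K a)⟫ := hJK'.inner_apply_right
  have hK_comp : ∀ a b, ⟪J a, K b⟫ = -⟪a, J (K b)⟫ := fun a b => hJ'.inner_apply_left a (K b)
  have hJK_comp : ∀ a b, ⟪J a, J (K b)⟫ = ⟪a, K b⟫ := fun a b => hJiso a (K b)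
  obtain rfl : A = skewCurvatureTensor (fun a b => ⟪a, K b⟫)
      - skewCurvatureTensor (fun a b => ⟪a, J (K b)⟫) := by
    funext x y z w; exact hA x y z w
  obtain ⟨antisymm, pair_symm, bianchi⟩ :=
    (isAlgebraicCurvatureTensor_skewCurvatureTensor hK_skew).sub
      (isAlgebraicCurvatureTensor_skewCurvatureTensor hJK_skew)
  refine ⟨?_, antisymm, pair_symm, bianchi,
    skewCurvatureTensor_sub_apply_add_apply_comp_eq_zero hK_skew hJK_skew hK_comp hJK_comp,
    skewCurvatureTensor_sub_apply_comp_eq_zero hK_skew hJK_skew hK_comp hJK_comp⟩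
  obtain ⟨x, hx⟩ := exists_ne (0 : V)
  intro hA0
  have hval := congrFun (congrFun (congrFun (congrFun hA0 x) (K x)) (K x)) x
  simp only [Pi.sub_apply, Pi.zero_apply, skewCurvatureTensor_apply_swap_self hK_skew,
    skewCurvatureTensor_apply_swap_self hJK_skew, hK, map_neg, inner_neg_right,
    real_inner_self_eq_norm_sq, hJ'.inner_self_apply] at hval
  have hx' : 0 < ‖x‖ := norm_pos_iff.mpr hx
  nlinarith [pow_pos hx' 4]

/-- if `J`, `K` are anticommuting unitary complex structures on a nonzero
inner product space, then `A := A_K - A_{JK}` is a nonzero algebraic curvature tensor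
whose complex Jacobi operator and complex curvature operator (with respect to `J`)
vanish for every complex line. -/
theorem exists_nonzero_curvature_with_vanishing_complex_operators
    {V : Type*} [NormedAddCommGroup V] [InnerProductSpace ℝ V] [FiniteDimensional ℝ V]
    [Nontrivial V]
    (J K : V →ₗ[ℝ] V)
    (hJ : ∀ x, J (J x) = -x) (hJiso : ∀ x y : V, ⟪J x, J y⟫ = ⟪x, y⟫)
    (hK : ∀ x, K (K x) = -x) (hKiso : ∀ x y : V, ⟪K x, K y⟫ = ⟪x, y⟫)
    (hanti : ∀ x : V, J (K x) + K (J x) = 0)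
    (A : V → V → V → V → ℝ)
    (hA : ∀ x y z w : V, A x y z w =
      (⟪x, K w⟫ * ⟪y, K z⟫ - ⟪x, K z⟫ * ⟪y, K w⟫ - 2 * ⟪x, K y⟫ * ⟪z, K w⟫)
      - (⟪x, J (K w)⟫ * ⟪y, J (K z)⟫ - ⟪x, J (K z)⟫ * ⟪y, J (K w)⟫
          - 2 * ⟪x, J (K y)⟫ * ⟪z, J (K w)⟫)) :
    A ≠ 0
    ∧ (∀ x y z w : V, A x y z w = - A y x z w)
    ∧ (∀ x y z w : V, A x y z w = A z w x y)
    ∧ (∀ x y z w : V, A x y z w + A y z x w + A z x y w = 0)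
    ∧ (∀ x y z : V, A y x x z + A y (J x) (J x) z = 0)
    ∧ (∀ x z w : V, A x (J x) z w = 0) :=
  exists_nonzero_curvature_with_vanishing_complex_operators_general J K hJ hJiso hK hKiso hanti A hA
end

section
/- Let V be a finite-dimensional real inner product space with dim V ≡ 0 mod 4 and dim V > 0. Then there exist a unitary complex structure J on V and a nonzero algebraic curvature tensor A on V such that the complex Jacobi operator vanishes for every complex line (A(y,x,x,z) + A(y,Jx,Jx,z) = 0 for all x,y,z ∈ V) and the complex curvature operator vanishes for every complex line (A(x,Jx,z,w) = 0 for all x,z,w ∈ V). -/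
/-!
Identify `V` isometrically with `ℍⁿ` and let `J`, `K` be left multiplication by the imaginary
units `i`, `j`, which anticommute. The form `ω x y = ⟪K x, y⟫` is alternating, so `R_ω` is an
algebraic curvature tensor, and `J` is `ω`-self-adjoint, so `ω (J x) (J y) = -ω x y`: up to sign,
`J` swaps `ω` and `ω (J ·) ·`. Hence in `A = R_ω - R_{ω (J ·) ·}` the two contributions to the
complex Jacobi and complex curvature operators cancel, while `A e (K e) e (K e) = 3 ‖e‖⁴ ≠ 0`.
-/

open scoped RealInnerProductSpace Quaternion
open Module

section CurvatureTensor

variable {R M : Type*} [CommRing R] [AddCommGroup M] [Module R M]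

structure IsAlgebraicCurvatureTensor_s13 (A : M →ₗ[R] M →ₗ[R] M →ₗ[R] M →ₗ[R] R) : Prop where
  antisymm : ∀ x y z w, A x y z w = -A y x z w
  pair_symm : ∀ x y z w, A x y z w = A z w x y
  bianchi : ∀ x y z w, A x y z w + A y z x w + A z x y w = 0

namespace IsAlgebraicCurvatureTensor_s13

variable {A B : M →ₗ[R] M →ₗ[R] M →ₗ[R] M →ₗ[R] R}

theorem add (hA : IsAlgebraicCurvatureTensor_s13 A) (hB : IsAlgebraicCurvatureTensor_s13 B) :
    IsAlgebraicCurvatureTensor_s13 (A + B) where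
  antisymm x y z w := by simp only [LinearMap.add_apply, hA.antisymm x y, hB.antisymm x y]; ring
  pair_symm x y z w := by simp only [LinearMap.add_apply, hA.pair_symm x y, hB.pair_symm x y]
  bianchi x y z w := by
    simp only [LinearMap.add_apply]
    linear_combination hA.bianchi x y z w + hB.bianchi x y z w

theorem smul (hA : IsAlgebraicCurvatureTensor_s13 A) (c : R) : IsAlgebraicCurvatureTensor_s13 (c • A) where
  antisymm x y z w := by simp only [LinearMap.smul_apply, hA.antisymm x y, smul_neg]
  pair_symm x y z w := by simp only [LinearMap.smul_apply, hA.pair_symm x y]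
  bianchi x y z w := by
    simp only [LinearMap.smul_apply, smul_eq_mul]
    linear_combination c * hA.bianchi x y z w

end IsAlgebraicCurvatureTensor_s13

def curvatureTensor (ω : M →ₗ[R] M →ₗ[R] R) : M →ₗ[R] M →ₗ[R] M →ₗ[R] M →ₗ[R] R := by
  refine LinearMap.mk₂ R (fun x y => LinearMap.mk₂ R
    (fun z w => ω x z * ω y w - ω x w * ω y z + 2 * ω x y * ω z w) ?_ ?_ ?_ ?_) ?_ ?_ ?_ ?_ <;>
  intros <;> (try ext) <;>
  simp only [map_add, map_smul, LinearMap.add_apply, LinearMap.smul_apply, smul_eq_mul,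
    LinearMap.mk₂_apply] <;>
  ring

@[simp]
theorem curvatureTensor_apply (ω : M →ₗ[R] M →ₗ[R] R) (x y z w : M) :
    curvatureTensor ω x y z w = ω x z * ω y w - ω x w * ω y z + 2 * ω x y * ω z w :=
  rfl

/-- `R_ω - R_η`; written with `(-1) •` since instance search finds no subtraction on iterated
linear maps of this depth. -/
def curvatureTensorDiff (ω η : M →ₗ[R] M →ₗ[R] R) : M →ₗ[R] M →ₗ[R] M →ₗ[R] M →ₗ[R] R :=
  curvatureTensor ω + (-1 : R) • curvatureTensor η

@[simp]
theorem curvatureTensorDiff_apply (ω η : M →ₗ[R] M →ₗ[R] R) (x y z w : M) :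
    curvatureTensorDiff ω η x y z w = curvatureTensor ω x y z w - curvatureTensor η x y z w := by
  simp only [curvatureTensorDiff, LinearMap.add_apply, LinearMap.smul_apply, smul_eq_mul]
  ring

variable {ω η : M →ₗ[R] M →ₗ[R] R}

theorem isAlgebraicCurvatureTensor_curvatureTensor (hω : ω.IsAlt) :
    IsAlgebraicCurvatureTensor_s13 (curvatureTensor ω) where
  antisymm x y z w := by simp only [curvatureTensor_apply, ← hω.neg x y]; ring
  pair_symm x y z w := by
    simp only [curvatureTensor_apply, ← hω.neg x z, ← hω.neg y w, ← hω.neg x w, ← hω.neg y z]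
    ring
  bianchi x y z w := by
    simp only [curvatureTensor_apply, ← hω.neg x z, ← hω.neg x y, ← hω.neg y z]
    ring

theorem isAlgebraicCurvatureTensor_curvatureTensorDiff (hω : ω.IsAlt) (hη : η.IsAlt) :
    IsAlgebraicCurvatureTensor_s13 (curvatureTensorDiff ω η) :=
  (isAlgebraicCurvatureTensor_curvatureTensor hω).add
    ((isAlgebraicCurvatureTensor_curvatureTensor hη).smul _)

theorem curvatureTensor_jacobi (hω : ω.IsAlt) (x y z : M) :
    curvatureTensor ω y x x z = 3 * ω y x * ω x z := by
  simp only [curvatureTensor_apply, hω.self_eq_zero]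
  ring

theorem curvatureTensor_sectional (hω : ω.IsAlt) (x y : M) :
    curvatureTensor ω x y x y = 3 * ω x y ^ 2 := by
  simp only [curvatureTensor_apply, hω.self_eq_zero, ← hω.neg x y]
  ring

end CurvatureTensor

section ComplexStructure

variable {R M : Type*} [Field R] [CharZero R] [AddCommGroup M] [Module R M]
  {J : M →ₗ[R] M} {ω : M →ₗ[R] M →ₗ[R] R}

theorem LinearMap.IsAlt.comp_of_isAdjointPair (hω : ω.IsAlt) (hωJ : ω.IsAdjointPair ω J J) :
    (ω ∘ₗ J).IsAlt := by
  intro x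
  have h : ω (J x) x = -ω (J x) x := by rw [hω.neg, hωJ]
  simpa only [LinearMap.comp_apply, CharZero.eq_neg_self_iff] using h

theorem curvatureTensorDiff_comp_jacobi (hJ : ∀ x, J (J x) = -x) (hω : ω.IsAlt)
    (hωJ : ω.IsAdjointPair ω J J) (x y z : M) :
    curvatureTensorDiff ω (ω ∘ₗ J) y x x z + curvatureTensorDiff ω (ω ∘ₗ J) y (J x) (J x) z =
      0 := by
  have hJω : ∀ x y, ω x (J y) = ω (J x) y := fun x y => (hωJ x y).symm
  simp only [curvatureTensorDiff_apply, curvatureTensor_jacobi hω,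
    curvatureTensor_jacobi (hω.comp_of_isAdjointPair hωJ), LinearMap.comp_apply, hJω, hJ, map_neg,
    LinearMap.neg_apply]
  ring

theorem curvatureTensorDiff_comp_complex (hJ : ∀ x, J (J x) = -x) (hω : ω.IsAlt)
    (hωJ : ω.IsAdjointPair ω J J) (x z w : M) :
    curvatureTensorDiff ω (ω ∘ₗ J) x (J x) z w = 0 := by
  have hJxx : ω (J x) x = 0 := hω.comp_of_isAdjointPair hωJ x
  have hJω : ∀ x y, ω x (J y) = ω (J x) y := fun x y => (hωJ x y).symm
  simp only [curvatureTensorDiff_apply, curvatureTensor_apply, LinearMap.comp_apply, hJ, map_neg,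
    LinearMap.neg_apply, hJω, hJxx, hω.self_eq_zero]
  ring

theorem curvatureTensorDiff_comp_ne_zero (hω : ω.IsAlt) (hωJ : ω.IsAdjointPair ω J J) {x y : M}
    (hxy : ω x y ^ 2 ≠ ω (J x) y ^ 2) :
    curvatureTensorDiff ω (ω ∘ₗ J) ≠ 0 := by
  intro h
  have h0 := congr($h x y x y)
  rw [curvatureTensorDiff_apply, curvatureTensor_sectional hω,
    curvatureTensor_sectional (hω.comp_of_isAdjointPair hωJ)] at h0
  simp only [LinearMap.comp_apply, LinearMap.zero_apply] at h0
  exact hxy (by linear_combination h0 / 3)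

end ComplexStructure

section UnitaryComplexStructure

variable {V W : Type*} [NormedAddCommGroup V] [InnerProductSpace ℝ V] [NormedAddCommGroup W]
  [InnerProductSpace ℝ W]

structure IsUnitaryComplexStructure_s13 (J : V →ₗ[ℝ] V) : Prop where
  apply_apply : ∀ x, J (J x) = -x
  inner_map_map : ∀ x y, ⟪J x, J y⟫ = ⟪x, y⟫

namespace IsUnitaryComplexStructure_s13

variable {J : V →ₗ[ℝ] V}

theorem inner_map_left (hJ : IsUnitaryComplexStructure_s13 J) (x y : V) : ⟪J x, y⟫ = -⟪x, J y⟫ := by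
  have h := hJ.inner_map_map x (J y)
  rw [hJ.apply_apply, inner_neg_right] at h
  linarith

theorem inner_apply_self (hJ : IsUnitaryComplexStructure_s13 J) (x : V) : ⟪J x, x⟫ = 0 := by
  have h := hJ.inner_map_left x x
  rw [real_inner_comm (J x) x] at h
  linarith

theorem conj {J : W →ₗ[ℝ] W} (hJ : IsUnitaryComplexStructure_s13 J) (E : W ≃ₗᵢ[ℝ] V) :
    IsUnitaryComplexStructure_s13 (E.toLinearMap ∘ₗ J ∘ₗ E.symm.toLinearMap) where
  apply_apply x := by simp [hJ.apply_apply]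
  inner_map_map x y := by simp [hJ.inner_map_map]

theorem isAlt_innerₗ_comp (hJ : IsUnitaryComplexStructure_s13 J) : (innerₗ V ∘ₗ J).IsAlt :=
  hJ.inner_apply_self

theorem isAdjointPair_innerₗ_comp (hJ : IsUnitaryComplexStructure_s13 J) {K : V →ₗ[ℝ] V}
    (hKJ : ∀ x, K (J x) = -J (K x)) :
    (innerₗ V ∘ₗ K).IsAdjointPair (innerₗ V ∘ₗ K) J J := by
  intro x y
  simp only [LinearMap.comp_apply, innerₗ_apply_apply, hKJ, inner_neg_left, hJ.inner_map_left,
    neg_neg]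

end IsUnitaryComplexStructure_s13

end UnitaryComplexStructure

section QuaternionicModel

theorem Quaternion.inner_mul_left (q a b : ℍ) : ⟪q * a, b⟫ = ⟪a, star q * b⟫ := by
  simp only [Quaternion.inner_def, Quaternion.re_mul, star_mul, star_star, Quaternion.re_star,
    Quaternion.imI_mul, Quaternion.imJ_mul, Quaternion.imK_mul, Quaternion.imI_star,
    Quaternion.imJ_star, Quaternion.imK_star]
  ring

theorem Quaternion.exists_anticommuting_imaginary_units :
    ∃ p q : ℍ, p * p = -1 ∧ star p = -p ∧ q * q = -1 ∧ star q = -q ∧ q * p = -(p * q) := by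
  have hpp : (⟨0, 1, 0, 0⟩ : ℍ) * (⟨0, 1, 0, 0⟩ : ℍ) = -1 := by ext <;> simp
  have hp : star (⟨0, 1, 0, 0⟩ : ℍ) = -(⟨0, 1, 0, 0⟩ : ℍ) := by ext <;> simp
  have hqq : (⟨0, 0, 1, 0⟩ : ℍ) * (⟨0, 0, 1, 0⟩ : ℍ) = -1 := by ext <;> simp
  have hq : star (⟨0, 0, 1, 0⟩ : ℍ) = -(⟨0, 0, 1, 0⟩ : ℍ) := by ext <;> simp
  have hqp : (⟨0, 0, 1, 0⟩ : ℍ) * (⟨0, 1, 0, 0⟩ : ℍ) =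
      -((⟨0, 1, 0, 0⟩ : ℍ) * (⟨0, 0, 1, 0⟩ : ℍ)) := by
    ext <;> simp
  exact ⟨_, _, hpp, hp, hqq, hq, hqp⟩

variable {ι : Type*} [Fintype ι]

theorem PiLp.inner_quaternion_smul_left (q : ℍ) (f g : PiLp 2 fun _ : ι => ℍ) :
    ⟪q • f, g⟫ = ⟪f, star q • g⟫ := by
  simp only [PiLp.inner_apply, PiLp.smul_apply, smul_eq_mul, Quaternion.inner_mul_left]

theorem isUnitaryComplexStructure_quaternion_smul {q : ℍ} (hq : q * q = -1) (hq' : star q = -q) :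
    IsUnitaryComplexStructure_s13 (DistribSMul.toLinearMap ℝ (PiLp 2 fun _ : ι => ℍ) q) where
  apply_apply f := by simp only [DistribSMul.toLinearMap_apply, smul_smul, hq, neg_smul, one_smul]
  inner_map_map f g := by
    simp only [DistribSMul.toLinearMap_apply, PiLp.inner_quaternion_smul_left, smul_smul, hq',
      neg_mul, hq, neg_neg, one_smul]

theorem finrank_piLp_quaternion : finrank ℝ (PiLp 2 fun _ : ι => ℍ) = 4 * Fintype.card ι := by
  rw [(WithLp.linearEquiv 2 ℝ _).finrank_eq, Module.finrank_pi_fintype]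
  simp [Quaternion.finrank_eq_four, mul_comm]

end QuaternionicModel

theorem exists_anticommuting_unitaryComplexStructures {V : Type*} [NormedAddCommGroup V]
    [InnerProductSpace ℝ V] [FiniteDimensional ℝ V] (h : 4 ∣ finrank ℝ V) :
    ∃ J K : V →ₗ[ℝ] V, IsUnitaryComplexStructure_s13 J ∧ IsUnitaryComplexStructure_s13 K ∧
      ∀ x, K (J x) = -J (K x) := by
  obtain ⟨n, hn⟩ := h
  let W := PiLp 2 fun _ : Fin n => ℍ
  have hW : finrank ℝ W = finrank ℝ V := by simp [W, finrank_piLp_quaternion, hn]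
  let E : W ≃ₗᵢ[ℝ] V := (stdOrthonormalBasis ℝ W).equiv (stdOrthonormalBasis ℝ V) (finCongr hW)
  obtain ⟨p, q, hpp, hp, hqq, hq, hqp⟩ := Quaternion.exists_anticommuting_imaginary_units
  refine ⟨_, _, (isUnitaryComplexStructure_quaternion_smul hpp hp).conj E,
    (isUnitaryComplexStructure_quaternion_smul hqq hq).conj E, fun x => ?_⟩
  simp only [LinearMap.coe_comp, LinearEquiv.coe_coe, LinearIsometryEquiv.coe_toLinearEquiv,
    Function.comp_apply, LinearIsometryEquiv.symm_apply_apply, DistribSMul.toLinearMap_apply,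
    smul_smul, hqp, neg_smul, map_neg]

/-- if `dim V ≡ 0 mod 4` and `dim V > 0`, there exist a unitary complex
structure `J` and a nonzero algebraic curvature tensor `A` on `V` whose complex Jacobi
operator and complex curvature operator vanish for every complex line. -/
theorem exists_complex_model_with_vanishing_complex_operators
    {V : Type*} [NormedAddCommGroup V] [InnerProductSpace ℝ V] [FiniteDimensional ℝ V]
    (hdim : Module.finrank ℝ V % 4 = 0) (hpos : 0 < Module.finrank ℝ V) :
    ∃ (J : V →ₗ[ℝ] V) (A : V →ₗ[ℝ] V →ₗ[ℝ] V →ₗ[ℝ] V →ₗ[ℝ] ℝ),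
      (∀ x, J (J x) = -x)
      ∧ (∀ x y : V, ⟪J x, J y⟫ = ⟪x, y⟫)
      ∧ (∀ x y z w : V, A x y z w = - A y x z w)
      ∧ (∀ x y z w : V, A x y z w = A z w x y)
      ∧ (∀ x y z w : V, A x y z w + A y z x w + A z x y w = 0)
      ∧ A ≠ 0
      ∧ (∀ x y z : V, A y x x z + A y (J x) (J x) z = 0)
      ∧ (∀ x z w : V, A x (J x) z w = 0) := by
  obtain ⟨J, K, hJ, hK, hKJ⟩ :=
    exists_anticommuting_unitaryComplexStructures (Nat.dvd_of_mod_eq_zero hdim)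
  have : Nontrivial V := Module.finrank_pos_iff.mp hpos
  obtain ⟨e, he⟩ := exists_ne (0 : V)
  set ω := innerₗ V ∘ₗ K
  have hω : ω.IsAlt := hK.isAlt_innerₗ_comp
  have hωJ : ω.IsAdjointPair ω J J := hJ.isAdjointPair_innerₗ_comp hKJ
  have hωe : ω e (K e) ^ 2 ≠ ω (J e) (K e) ^ 2 := by
    simp only [ω, LinearMap.comp_apply, innerₗ_apply_apply, hK.inner_map_map, hJ.inner_apply_self]
    simpa using he
  have hA := isAlgebraicCurvatureTensor_curvatureTensorDiff hω (hω.comp_of_isAdjointPair hωJ)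
  exact ⟨J, curvatureTensorDiff ω (ω ∘ₗ J), hJ.apply_apply, hJ.inner_map_map, hA.antisymm,
    hA.pair_symm, hA.bianchi, curvatureTensorDiff_comp_ne_zero hω hωJ hωe,
    curvatureTensorDiff_comp_jacobi hJ.apply_apply hω hωJ,
    curvatureTensorDiff_comp_complex hJ.apply_apply hω hωJ⟩
end

section
/- Let (V, ⟨·,·⟩, J, A) be a compatible complex model. Then the complex Jacobi operator of A vanishes for every complex line (A(y,x,x,z) + A(y,Jx,Jx,z) = 0 for all x,y,z ∈ V) if and only if A is orthogonal to the space 𝔄₂(V,J), i.e. ⟨A, B⟩ = 0 for every algebraic curvature tensor B satisfying B(x,y,z,w) = B(Jx,Jy,z,w) + B(Jx,y,Jz,w) + B(Jx,y,z,Jw) for all x,y,z,w. -/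
open scoped RealInnerProductSpace

open LinearMap (IsAdjointPair applyₗ lcomp llcomp)

/-!
Let `L = grayOp J`, i.e. `L B (x,y,z,w) = B(Jx,Jy,z,w) + B(Jx,y,Jz,w) + B(Jx,y,z,Jw)`, so that
`𝔄₂(V,J)` is the space of curvature tensors fixed by `L`. Since `J` is skew-adjoint, `L` is
self-adjoint for the natural inner product, which is obtained by iterating the trace
`∑ᵢ β (X eᵢ) (Y eᵢ)` once per slot.

For a compatible curvature tensor `A` one has `L² A = 3 A - 2 L A`, so `P A := 3 A + L A`
(`grayProj J A`) is a curvature tensor in `𝔄₂` (four times the orthogonal projection of `A` onto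
it) and `⟨P A, B⟩ = 4 ⟨A, B⟩` for `B ∈ 𝔄₂`. Hence `A ⊥ 𝔄₂` iff `P A = 0`, testing against
`B = P A` for one direction. Finally `P A = 0` iff the complex Jacobi operator of `A` vanishes: on
one hand `4 (A(y,x,x,z) + A(y,Jx,Jx,z)) = P A(y,x,x,z) + P A(Jy,x,x,Jz)`; on the other hand
`P A(y,x,x,z)` is a combination of polarised complex Jacobi values, and the curvature tensor `P A`
is determined by its values `P A(y,x,x,z)`.
-/

section TraceForm

variable {ι V W : Type*} [Fintype ι] [NormedAddCommGroup V] [InnerProductSpace ℝ V]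
  [AddCommMonoid W] [Module ℝ W] (e : OrthonormalBasis ι ℝ V)

noncomputable def traceForm (β : W →ₗ[ℝ] W →ₗ[ℝ] ℝ) :
    (V →ₗ[ℝ] W) →ₗ[ℝ] (V →ₗ[ℝ] W) →ₗ[ℝ] ℝ :=
  ∑ i, β.compl₁₂ (applyₗ (e i)) (applyₗ (e i))

@[simp]
lemma traceForm_apply (β : W →ₗ[ℝ] W →ₗ[ℝ] ℝ) (X Y : V →ₗ[ℝ] W) :
    traceForm e β X Y = ∑ i, β (X (e i)) (Y (e i)) := by
  simp [traceForm]

variable {β : W →ₗ[ℝ] W →ₗ[ℝ] ℝ}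

lemma OrthonormalBasis.sum_apply_map_eq (F : V →ₗ[ℝ] V →ₗ[ℝ] ℝ) {T S : V →ₗ[ℝ] V}
    (h : IsAdjointPair (innerₗ V) (innerₗ V) T S) :
    ∑ i, F (T (e i)) (e i) = ∑ i, F (e i) (S (e i)) := by
  calc ∑ i, F (T (e i)) (e i) = ∑ i, ∑ k, ⟪e k, T (e i)⟫ * F (e k) (e i) := by
        refine Finset.sum_congr rfl fun i _ => ?_
        conv_lhs => rw [← e.sum_repr' (T (e i))]
        simp [map_sum, LinearMap.sum_apply]
    _ = ∑ k, ∑ i, ⟪e i, S (e k)⟫ * F (e k) (e i) := by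
        rw [Finset.sum_comm]
        refine Finset.sum_congr rfl fun k _ => Finset.sum_congr rfl fun i _ => ?_
        rw [real_inner_comm, ← innerₗ_apply_apply, ← innerₗ_apply_apply, h]
    _ = ∑ k, F (e k) (S (e k)) := by
        refine Finset.sum_congr rfl fun k _ => ?_
        conv_rhs => rw [← e.sum_repr' (S (e k))]
        simp [map_sum]

lemma isAdjointPair_traceForm_lcomp {T S : V →ₗ[ℝ] V}
    (h : IsAdjointPair (innerₗ V) (innerₗ V) T S) :
    IsAdjointPair (traceForm e β) (traceForm e β) (lcomp ℝ W T) (lcomp ℝ W S) := fun X Y => by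
  simpa using e.sum_apply_map_eq (β.compl₁₂ X Y) h

lemma LinearMap.IsAdjointPair.traceForm_llcomp {φ ψ : W →ₗ[ℝ] W} (h : IsAdjointPair β β φ ψ) :
    IsAdjointPair (traceForm e β) (traceForm e β) (llcomp ℝ V W W φ) (llcomp ℝ V W W ψ) :=
  fun X Y => by simpa using Finset.sum_congr rfl fun i _ => h (X (e i)) (Y (e i))

lemma traceForm_self_pos (hβ : ∀ a, a ≠ 0 → 0 < β a a) :
    ∀ X : V →ₗ[ℝ] W, X ≠ 0 → 0 < traceForm e β X X := by
  intro X hX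
  have hnonneg : ∀ a, 0 ≤ β a a := fun a => by
    rcases eq_or_ne a 0 with rfl | ha
    · simp
    · exact (hβ a ha).le
  obtain ⟨i, hi⟩ : ∃ i, X (e i) ≠ 0 := by
    by_contra! h
    exact hX (e.toBasis.ext fun i => by simpa using h i)
  rw [traceForm_apply]
  exact Finset.sum_pos' (fun i _ => hnonneg _) ⟨i, Finset.mem_univ i, hβ _ hi⟩

end TraceForm

section GrayOperator

variable {V : Type*} [AddCommGroup V] [Module ℝ V]

-- `simp` cannot use `map_neg` in the first slot: instance search fails on `AddCommGroup` of
-- trilinear forms.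
@[simp]
lemma LinearMap.map_neg₄ (X : V →ₗ[ℝ] V →ₗ[ℝ] V →ₗ[ℝ] V →ₗ[ℝ] ℝ) (x y z w : V) :
    X (-x) y z w = -X x y z w := by
  have h : X (-x + x) y z w = 0 := by simp
  rwa [map_add, LinearMap.add_apply, LinearMap.add_apply, LinearMap.add_apply,
    ← eq_neg_iff_add_eq_zero] at h

-- `lcomp ℝ _ J` substitutes `J` into the first slot, and `llcomp ℝ V _ _` moves a substitution
-- one slot to the right.
noncomputable def grayOp (J : V →ₗ[ℝ] V) :
    Module.End ℝ (V →ₗ[ℝ] V →ₗ[ℝ] V →ₗ[ℝ] V →ₗ[ℝ] ℝ) :=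
  lcomp ℝ _ J ∘ₗ (llcomp ℝ V _ _ (lcomp ℝ _ J) + llcomp ℝ V _ _ (llcomp ℝ V _ _ (lcomp ℝ _ J)) +
    llcomp ℝ V _ _ (llcomp ℝ V _ _ (llcomp ℝ V _ _ (lcomp ℝ ℝ J))))

@[simp]
lemma grayOp_apply (J : V →ₗ[ℝ] V) (X : V →ₗ[ℝ] V →ₗ[ℝ] V →ₗ[ℝ] V →ₗ[ℝ] ℝ) (x y z w : V) :
    grayOp J X x y z w = X (J x) (J y) z w + X (J x) y (J z) w + X (J x) y z (J w) := by
  simp [grayOp]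

noncomputable def grayProj (J : V →ₗ[ℝ] V) (A : V →ₗ[ℝ] V →ₗ[ℝ] V →ₗ[ℝ] V →ₗ[ℝ] ℝ) :
    V →ₗ[ℝ] V →ₗ[ℝ] V →ₗ[ℝ] V →ₗ[ℝ] ℝ :=
  (3 : ℝ) • A + grayOp J A

@[simp]
lemma grayProj_apply (J : V →ₗ[ℝ] V) (A : V →ₗ[ℝ] V →ₗ[ℝ] V →ₗ[ℝ] V →ₗ[ℝ] ℝ) (x y z w : V) :
    grayProj J A x y z w = 3 * A x y z w + grayOp J A x y z w := by
  simp [grayProj]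

def complexJacobi (J : V →ₗ[ℝ] V) (A : V →ₗ[ℝ] V →ₗ[ℝ] V →ₗ[ℝ] V →ₗ[ℝ] ℝ) (y a b z : V) : ℝ :=
  A y a b z + A y (J a) (J b) z

end GrayOperator

section NaturalInnerProduct

variable {ι V : Type*} [Fintype ι] [NormedAddCommGroup V] [InnerProductSpace ℝ V]
  (e : OrthonormalBasis ι ℝ V)

noncomputable def curvatureInner :
    (V →ₗ[ℝ] V →ₗ[ℝ] V →ₗ[ℝ] V →ₗ[ℝ] ℝ) →ₗ[ℝ] (V →ₗ[ℝ] V →ₗ[ℝ] V →ₗ[ℝ] V →ₗ[ℝ] ℝ) →ₗ[ℝ] ℝ :=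
  traceForm e (traceForm e (traceForm e (traceForm e (LinearMap.mul ℝ ℝ))))

lemma curvatureInner_apply (X Y : V →ₗ[ℝ] V →ₗ[ℝ] V →ₗ[ℝ] V →ₗ[ℝ] ℝ) :
    curvatureInner e X Y =
      ∑ i, ∑ j, ∑ k, ∑ l, X (e i) (e j) (e k) (e l) * Y (e i) (e j) (e k) (e l) := by
  simp [curvatureInner]

lemma curvatureInner_self_pos {X : V →ₗ[ℝ] V →ₗ[ℝ] V →ₗ[ℝ] V →ₗ[ℝ] ℝ} (hX : X ≠ 0) :
    0 < curvatureInner e X X := by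
  refine traceForm_self_pos e (traceForm_self_pos e (traceForm_self_pos e
    (traceForm_self_pos e fun a ha => ?_))) X hX
  simpa using mul_self_pos.mpr ha

variable {J : V →ₗ[ℝ] V}

lemma isAdjointPair_curvatureInner_grayOp (hJ : IsAdjointPair (innerₗ V) (innerₗ V) J ⇑(-J)) :
    IsAdjointPair (curvatureInner e) (curvatureInner e) (grayOp J) (grayOp J) := by
  let β₁ := traceForm e (LinearMap.mul ℝ ℝ)
  let β₂ := traceForm e β₁
  let β₃ := traceForm e β₂
  have h₁ := isAdjointPair_traceForm_lcomp e (β := β₃) hJ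
  have h₂ := (isAdjointPair_traceForm_lcomp e (β := β₂) hJ).traceForm_llcomp e
  have h₃ := ((isAdjointPair_traceForm_lcomp e (β := β₁) hJ).traceForm_llcomp e).traceForm_llcomp e
  have h₄ := (((isAdjointPair_traceForm_lcomp e (β := LinearMap.mul ℝ ℝ) hJ).traceForm_llcomp
    e).traceForm_llcomp e).traceForm_llcomp e
  unfold curvatureInner
  -- each term of `grayOp J` substitutes `J` twice, so the two adjoint signs cancel
  convert ((h₂.add h₃).add h₄).comp h₁ using 1 <;> funext X <;> ext x y z w <;> simp

lemma curvatureInner_grayProj (hJ : IsAdjointPair (innerₗ V) (innerₗ V) J ⇑(-J))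
    (A : V →ₗ[ℝ] V →ₗ[ℝ] V →ₗ[ℝ] V →ₗ[ℝ] ℝ) {B : V →ₗ[ℝ] V →ₗ[ℝ] V →ₗ[ℝ] V →ₗ[ℝ] ℝ}
    (hB : grayOp J B = B) :
    curvatureInner e (grayProj J A) B = 4 * curvatureInner e A B := by
  have hL := isAdjointPair_curvatureInner_grayOp e hJ A B
  rw [hB] at hL
  simp only [grayProj, map_add, map_smul, LinearMap.add_apply, LinearMap.smul_apply, smul_eq_mul,
    hL]
  ring

end NaturalInnerProduct

section CurvatureTensor

variable {V : Type*} [AddCommGroup V] [Module ℝ V]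

structure IsCurvatureTensor_s15 (A : V →ₗ[ℝ] V →ₗ[ℝ] V →ₗ[ℝ] V →ₗ[ℝ] ℝ) : Prop where
  antisymm : ∀ x y z w, A x y z w = -A y x z w
  pair_symm : ∀ x y z w, A x y z w = A z w x y
  bianchi : ∀ x y z w, A x y z w + A y z x w + A z x y w = 0

variable {A B : V →ₗ[ℝ] V →ₗ[ℝ] V →ₗ[ℝ] V →ₗ[ℝ] ℝ} {J : V →ₗ[ℝ] V}

namespace IsCurvatureTensor_s15

lemma add (hA : IsCurvatureTensor_s15 A) (hB : IsCurvatureTensor_s15 B) : IsCurvatureTensor_s15 (A + B) where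
  antisymm x y z w := by
    simp only [LinearMap.add_apply]
    linarith [hA.antisymm x y z w, hB.antisymm x y z w]
  pair_symm x y z w := by
    simp only [LinearMap.add_apply]
    linarith [hA.pair_symm x y z w, hB.pair_symm x y z w]
  bianchi x y z w := by
    simp only [LinearMap.add_apply]
    linarith [hA.bianchi x y z w, hB.bianchi x y z w]

lemma smul (hA : IsCurvatureTensor_s15 A) (c : ℝ) : IsCurvatureTensor_s15 (c • A) where
  antisymm x y z w := by
    simp only [LinearMap.smul_apply, smul_eq_mul]
    linear_combination c * hA.antisymm x y z w
  pair_symm x y z w := by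
    simp only [LinearMap.smul_apply, smul_eq_mul]
    linear_combination c * hA.pair_symm x y z w
  bianchi x y z w := by
    simp only [LinearMap.smul_apply, smul_eq_mul]
    linear_combination c * hA.bianchi x y z w

lemma eq_zero_of_apply_self (hA : IsCurvatureTensor_s15 A) (h : ∀ x y z, A y x x z = 0) : A = 0 := by
  have hpol : ∀ u a b v, A u a b v + A u b a v = 0 := fun u a b v => by
    have := h (a + b) u v
    simp only [map_add, LinearMap.add_apply] at this
    linarith [h a u v, h b u v]
  ext x y z w
  simp only [LinearMap.zero_apply]
  linarith [hpol x y z w, hpol x y w z, hA.antisymm x z y w, hA.antisymm x w y z,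
    hA.pair_symm x w y z, hA.pair_symm x z y w, hA.bianchi x y z w, hA.bianchi x y w z]

end IsCurvatureTensor_s15

lemma compat_J₁J₂ (hJ : ∀ x, J (J x) = -x) (hc : ∀ x y z w, A (J x) (J y) (J z) (J w) = A x y z w)
    (x y z w : V) : A (J x) (J y) z w = A x y (J z) (J w) := by
  simpa [hJ] using hc x y (J z) (J w)

lemma compat_J₁J₃ (hJ : ∀ x, J (J x) = -x) (hc : ∀ x y z w, A (J x) (J y) (J z) (J w) = A x y z w)
    (x y z w : V) : A (J x) y (J z) w = A x (J y) z (J w) := by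
  simpa [hJ] using hc x (J y) z (J w)

lemma compat_J₁J₄ (hJ : ∀ x, J (J x) = -x) (hc : ∀ x y z w, A (J x) (J y) (J z) (J w) = A x y z w)
    (x y z w : V) : A (J x) y z (J w) = A x (J y) (J z) w := by
  simpa [hJ] using hc x (J y) (J z) w

lemma IsCurvatureTensor_s15.grayOp (hA : IsCurvatureTensor_s15 A) (hJ : ∀ x, J (J x) = -x)
    (hc : ∀ x y z w, A (J x) (J y) (J z) (J w) = A x y z w) :
    IsCurvatureTensor_s15 (grayOp J A) where
  antisymm x y z w := by
    simp only [grayOp_apply]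
    linarith [hA.antisymm (J x) (J y) z w, hA.antisymm x (J y) z (J w),
      hA.antisymm x (J y) (J z) w, compat_J₁J₃ hJ hc x y z w, compat_J₁J₄ hJ hc x y z w]
  pair_symm x y z w := by
    simp only [grayOp_apply]
    linarith [hA.pair_symm x y (J z) (J w), hA.pair_symm (J x) y (J z) w,
      hA.pair_symm x (J y) (J z) w, compat_J₁J₂ hJ hc x y z w, compat_J₁J₄ hJ hc x y z w]
  bianchi x y z w := by
    simp only [grayOp_apply]
    linarith [hA.bianchi (J x) (J y) z w, hA.bianchi x (J y) z (J w), hA.bianchi x (J y) (J z) w,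
      hA.antisymm (J x) (J z) y w, hA.antisymm (J x) z (J y) w, hA.antisymm x (J z) y (J w),
      hA.antisymm x z (J y) (J w), compat_J₁J₂ hJ hc x z y w, compat_J₁J₃ hJ hc x z y w,
      compat_J₁J₃ hJ hc x y z w, compat_J₁J₄ hJ hc x y z w]

lemma IsCurvatureTensor_s15.grayProj (hA : IsCurvatureTensor_s15 A) (hJ : ∀ x, J (J x) = -x)
    (hc : ∀ x y z w, A (J x) (J y) (J z) (J w) = A x y z w) :
    IsCurvatureTensor_s15 (grayProj J A) :=
  (hA.smul 3).add (hA.grayOp hJ hc)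

lemma grayOp_grayProj (hJ : ∀ x, J (J x) = -x)
    (hc : ∀ x y z w, A (J x) (J y) (J z) (J w) = A x y z w) :
    grayOp J (grayProj J A) = grayProj J A := by
  ext x y z w
  simp only [grayOp_apply, grayProj_apply, hJ, map_neg, LinearMap.map_neg₄, LinearMap.neg_apply]
  linarith [compat_J₁J₂ hJ hc x y z w, compat_J₁J₃ hJ hc x y z w, compat_J₁J₄ hJ hc x y z w]

lemma complexJacobi_add_swap (h : ∀ x y z, complexJacobi J A y x x z = 0) (y a b z : V) :
    complexJacobi J A y a b z + complexJacobi J A y b a z = 0 := by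
  have := h (a + b) y z
  simp only [complexJacobi, map_add, LinearMap.add_apply] at this h ⊢
  linarith [h a y z, h b y z]

lemma grayProj_apply_self (hA : IsCurvatureTensor_s15 A) (hJ : ∀ x, J (J x) = -x)
    (hc : ∀ x y z w, A (J x) (J y) (J z) (J w) = A x y z w) (x y z : V) :
    grayProj J A y x x z = 2 * complexJacobi J A y x x z
      - (complexJacobi J A x x y z + complexJacobi J A x y x z)
      + (complexJacobi J A x x (J y) (J z) + complexJacobi J A x (J y) x (J z)) := by
  simp only [grayProj_apply, grayOp_apply, complexJacobi, hJ, map_neg, LinearMap.neg_apply]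
  linarith [hA.antisymm (J x) y (J x) z, hA.antisymm x (J y) x (J z), hA.bianchi x x y z,
    hA.bianchi x (J x) (J y) z, hA.bianchi x (J y) (J x) z, hA.bianchi x x (J y) (J z),
    compat_J₁J₂ hJ hc x y x z, compat_J₁J₃ hJ hc x y x z, compat_J₁J₃ hJ hc x x y z]

lemma four_mul_complexJacobi (hA : IsCurvatureTensor_s15 A) (hJ : ∀ x, J (J x) = -x)
    (hc : ∀ x y z w, A (J x) (J y) (J z) (J w) = A x y z w) (x y z : V) :
    4 * complexJacobi J A y x x z = grayProj J A y x x z + grayProj J A (J y) x x (J z) := by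
  simp only [grayProj_apply, grayOp_apply, complexJacobi, hJ, map_neg, LinearMap.map_neg₄]
  linarith [hA.antisymm (J x) y (J x) z, hA.antisymm x (J y) x (J z), hA.antisymm (J x) (J y) x z,
    hA.antisymm x y (J x) (J z), hA.antisymm (J x) y x (J z), hA.antisymm x (J y) (J x) z,
    compat_J₁J₂ hJ hc x y x z, compat_J₁J₃ hJ hc x y x z, compat_J₁J₄ hJ hc x y x z]

lemma grayProj_eq_zero_iff (hA : IsCurvatureTensor_s15 A) (hJ : ∀ x, J (J x) = -x)
    (hc : ∀ x y z w, A (J x) (J y) (J z) (J w) = A x y z w) :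
    grayProj J A = 0 ↔ ∀ x y z, complexJacobi J A y x x z = 0 := by
  constructor
  · intro h x y z
    have := four_mul_complexJacobi hA hJ hc x y z
    simp only [h, LinearMap.zero_apply] at this
    linarith
  · intro h
    refine (hA.grayProj hJ hc).eq_zero_of_apply_self fun x y z => ?_
    rw [grayProj_apply_self hA hJ hc, h, complexJacobi_add_swap h, complexJacobi_add_swap h]
    ring

end CurvatureTensor

/-- in a compatible complex model, the complex Jacobi operator vanishes
for every complex line iff `A` is orthogonal to the Gray space `𝔄₂(V,J)` with respect to
the natural inner product on curvature tensors. -/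
theorem complexJacobi_zero_iff_orthogonal_to_A2
    {V : Type*} [NormedAddCommGroup V] [InnerProductSpace ℝ V] [FiniteDimensional ℝ V]
    (J : V →ₗ[ℝ] V) (hJ : ∀ x, J (J x) = -x)
    (hJiso : ∀ x y : V, ⟪J x, J y⟫ = ⟪x, y⟫)
    (A : V →ₗ[ℝ] V →ₗ[ℝ] V →ₗ[ℝ] V →ₗ[ℝ] ℝ)
    (hAanti : ∀ x y z w : V, A x y z w = - A y x z w)
    (hApair : ∀ x y z w : V, A x y z w = A z w x y)
    (hAbianchi : ∀ x y z w : V, A x y z w + A y z x w + A z x y w = 0)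
    (hcompat : ∀ x y z w : V, A (J x) (J y) (J z) (J w) = A x y z w) :
    (∀ x y z : V, A y x x z + A y (J x) (J x) z = 0) ↔
      (∀ B : V →ₗ[ℝ] V →ₗ[ℝ] V →ₗ[ℝ] V →ₗ[ℝ] ℝ,
        (∀ x y z w : V, B x y z w = - B y x z w) →
        (∀ x y z w : V, B x y z w = B z w x y) →
        (∀ x y z w : V, B x y z w + B y z x w + B z x y w = 0) →
        (∀ x y z w : V,
          B x y z w = B (J x) (J y) z w + B (J x) y (J z) w + B (J x) y z (J w)) →
        ∀ (m : ℕ) (e : OrthonormalBasis (Fin m) ℝ V),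
          ∑ i, ∑ j, ∑ k, ∑ l,
            A (e i) (e j) (e k) (e l) * B (e i) (e j) (e k) (e l) = 0) := by
  have hA : IsCurvatureTensor_s15 A := ⟨hAanti, hApair, hAbianchi⟩
  have hskew : IsAdjointPair (innerₗ V) (innerₗ V) J ⇑(-J) := fun x y => by
    simpa [hJ, neg_eq_iff_eq_neg] using hJiso x (J y)
  change (∀ x y z, complexJacobi J A y x x z = 0) ↔ _
  rw [← grayProj_eq_zero_iff hA hJ hcompat]
  constructor
  · intro hP B _ _ _ hB m e
    have hLB : grayOp J B = B := by
      ext x y z w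
      simp [← hB]
    have h := curvatureInner_grayProj e hskew A hLB
    rw [hP, map_zero, LinearMap.zero_apply, curvatureInner_apply] at h
    linarith
  · intro horth
    by_contra hP
    let e := stdOrthonormalBasis ℝ V
    have hPA := hA.grayProj hJ hcompat
    have hLP : grayOp J (grayProj J A) = grayProj J A := grayOp_grayProj hJ hcompat
    have hAP : curvatureInner e A (grayProj J A) = 0 := by
      rw [curvatureInner_apply]
      refine horth _ hPA.antisymm hPA.pair_symm hPA.bianchi (fun x y z w => ?_) _ e
      rw [← grayOp_apply, hLP]
    have hpos := curvatureInner_self_pos e hP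
    rw [curvatureInner_grayProj e hskew A hLP, hAP, mul_zero] at hpos
    exact hpos.false
end

section
/- Let (V, ⟨·,·⟩, J, A) be a complex model such that the complex Jacobi operator commutes with J for every complex line, i.e. A(y,x,x,Jz) + A(y,Jx,Jx,Jz) = −A(Jy,x,x,z) − A(Jy,Jx,Jx,z) for all x,y,z ∈ V. Then for all x, y, z, w ∈ V: A(y,x,w,z) + A(y,w,x,z) = A(Jy,Jx,Jw,Jz) + A(Jy,Jw,Jx,Jz). -/
/-!
Write `P(y,x,w,z) = A(y,x,w,z) + A(y,w,x,z)` for the polarized Jacobi operator. Polarizing the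
hypothesis in `x` and then replacing `z` by `Jz` gives
`P(y,x,w,z) + P(y,Jx,Jw,z) = P(Jy,x,w,Jz) + P(Jy,Jx,Jw,Jz)`.
The curvature symmetries give `P(x,y,z,w) = P(y,x,w,z)`, so the same identity with the roles of
`(y,z)` and `(x,w)` exchanged reads
`P(y,x,w,z) + P(Jy,x,w,Jz) = P(y,Jx,Jw,z) + P(Jy,Jx,Jw,Jz)`.
Adding the two, the mixed terms cancel and `P(y,x,w,z) = P(Jy,Jx,Jw,Jz)`.
-/

open scoped RealInnerProductSpace

section

variable {M : Type*} [AddCommGroup M] [Module ℝ M]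

def polarizedJacobi (A : M →ₗ[ℝ] M →ₗ[ℝ] M →ₗ[ℝ] M →ₗ[ℝ] ℝ) (y x w z : M) : ℝ :=
  A y x w z + A y w x z

variable {A : M →ₗ[ℝ] M →ₗ[ℝ] M →ₗ[ℝ] M →ₗ[ℝ] ℝ}

theorem polarizedJacobi_swap (hAanti : ∀ x y z w, A x y z w = - A y x z w)
    (hApair : ∀ x y z w, A x y z w = A z w x y) (x y z w : M) :
    polarizedJacobi A x y z w = polarizedJacobi A y x w z := by
  have hlast : A y x z w = - A y x w z := by
    rw [hApair, hAanti, hApair]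
  unfold polarizedJacobi
  rw [hAanti x y, hlast, hApair x z]
  ring

variable {J : M →ₗ[ℝ] M}

theorem polarizedJacobi_polarize
    (hcomm : ∀ x y z, A y x x (J z) + A y (J x) (J x) (J z)
        = - A (J y) x x z - A (J y) (J x) (J x) z) (x w y z : M) :
    polarizedJacobi A y x w (J z) + polarizedJacobi A y (J x) (J w) (J z)
      = - polarizedJacobi A (J y) x w z - polarizedJacobi A (J y) (J x) (J w) z := by
  have hsum := hcomm (x + w) y z
  have hx := hcomm x y z
  have hw := hcomm w y z
  simp only [map_add, LinearMap.add_apply] at hsum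
  unfold polarizedJacobi
  linarith

theorem polarizedJacobi_add_J (hJ : ∀ x, J (J x) = -x)
    (hcomm : ∀ x y z, A y x x (J z) + A y (J x) (J x) (J z)
        = - A (J y) x x z - A (J y) (J x) (J x) z) (x w y z : M) :
    polarizedJacobi A y x w z + polarizedJacobi A y (J x) (J w) z
      = polarizedJacobi A (J y) x w (J z) + polarizedJacobi A (J y) (J x) (J w) (J z) := by
  have h := polarizedJacobi_polarize hcomm x w y (J z)
  simp only [hJ z, polarizedJacobi, map_neg] at h ⊢
  linarith

end

theorem symmetrized_compatibility_of_complexJacobi_commutes_general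
    {V : Type*} [NormedAddCommGroup V] [InnerProductSpace ℝ V]
    (J : V →ₗ[ℝ] V) (hJ : ∀ x, J (J x) = -x)
    (A : V →ₗ[ℝ] V →ₗ[ℝ] V →ₗ[ℝ] V →ₗ[ℝ] ℝ)
    (hAanti : ∀ x y z w : V, A x y z w = - A y x z w)
    (hApair : ∀ x y z w : V, A x y z w = A z w x y)
    (hcomm : ∀ x y z : V,
      A y x x (J z) + A y (J x) (J x) (J z)
        = - A (J y) x x z - A (J y) (J x) (J x) z) :
    ∀ x y z w : V,
      A y x w z + A y w x z = A (J y) (J x) (J w) (J z) + A (J y) (J w) (J x) (J z) := by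
  intro x y z w
  have swap := polarizedJacobi_swap hAanti hApair
  have h₁ := polarizedJacobi_add_J hJ hcomm x w y z
  have h₂ := polarizedJacobi_add_J hJ hcomm y z x w
  rw [swap x y z w, swap x (J y) (J z) w, swap (J x) y z (J w),
    swap (J x) (J y) (J z) (J w)] at h₂
  change polarizedJacobi A y x w z = polarizedJacobi A (J y) (J x) (J w) (J z)
  linarith

/-- if the complex Jacobi operator commutes with `J` for every complex
line, then `A(y,x,w,z) + A(y,w,x,z) = A(Jy,Jx,Jw,Jz) + A(Jy,Jw,Jx,Jz)`. -/
theorem symmetrized_compatibility_of_complexJacobi_commutes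
    {V : Type*} [NormedAddCommGroup V] [InnerProductSpace ℝ V] [FiniteDimensional ℝ V]
    (J : V →ₗ[ℝ] V) (hJ : ∀ x, J (J x) = -x)
    (hJiso : ∀ x y : V, ⟪J x, J y⟫ = ⟪x, y⟫)
    (A : V →ₗ[ℝ] V →ₗ[ℝ] V →ₗ[ℝ] V →ₗ[ℝ] ℝ)
    (hAanti : ∀ x y z w : V, A x y z w = - A y x z w)
    (hApair : ∀ x y z w : V, A x y z w = A z w x y)
    (hAbianchi : ∀ x y z w : V, A x y z w + A y z x w + A z x y w = 0)
    (hcomm : ∀ x y z : V,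
      A y x x (J z) + A y (J x) (J x) (J z)
        = - A (J y) x x z - A (J y) (J x) (J x) z) :
    ∀ x y z w : V,
      A y x w z + A y w x z = A (J y) (J x) (J w) (J z) + A (J y) (J w) (J x) (J z) :=
  symmetrized_compatibility_of_complexJacobi_commutes_general J hJ A hAanti hApair hcomm
end
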